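/- arXiv:2504.07327 — 6 statements merged into one kernel-verified Lean document; each statement's English description precedes it below -/
import Mathlib

section
/- If x is a real element of a finite group G (i.e., x is G-conjugate to x⁻¹), then there exists a 2-element y ∈ G such that x^y = x⁻¹. -/
def IsReal {G : Type*} [Group G] (x : G) : Prop := ∃ g : G, g⁻¹ * x * g = x⁻¹

theorem stmt_0 {G : Type*} [Group G] [Finite G] (x : G) (hx : IsReal x) :
    ∃ y : G, (∃ n : ℕ, orderOf y = 2 ^ n) ∧ y⁻¹ * x * y = x⁻¹ := by
  obtain ⟨g, hg⟩ := hx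
  have hinv : g⁻¹ * x⁻¹ * g = x := by
    have : (g⁻¹ * x * g)⁻¹ = (x⁻¹)⁻¹ := by rw [hg]
    simpa [mul_assoc] using this
  have hcomm : Commute x (g ^ 2) := by
    have : (g ^ 2)⁻¹ * x * g ^ 2 = x := by
      have : g⁻¹ * (g⁻¹ * x * g) * g = g⁻¹ * x⁻¹ * g := by rw [hg]
      rw [hinv] at this
      simpa [pow_two, mul_assoc, mul_inv_rev] using this
    have := this
    unfold Commute SemiconjBy
    calc x * g ^ 2 = g ^ 2 * ((g ^ 2)⁻¹ * x * g ^ 2) := by group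
    _ = g ^ 2 * x := by rw [this]
  set m := orderOf g with hm
  have hm0 : m ≠ 0 := (orderOf_pos g).ne'
  set b := ordCompl[2] m with hb
  have hodd : ¬ 2 ∣ b := Nat.not_dvd_ordCompl Nat.prime_two hm0
  obtain ⟨k, hk⟩ : ∃ k, b = 2 * k + 1 := by
    rcases Nat.even_or_odd b with h | h
    · exact absurd h.two_dvd hodd
    · exact h
  refine ⟨g ^ b, ⟨m.factorization 2, ?_⟩, ?_⟩
  · have hdvd : b ∣ m := Nat.ordCompl_dvd m 2
    rw [orderOf_pow, Nat.gcd_eq_right hdvd, ← hm]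
    conv_lhs => rw [← Nat.ordProj_mul_ordCompl_eq_self m 2]
    exact Nat.mul_div_cancel _ (Nat.ordCompl_pos 2 hm0)
  · have h2k : Commute x ((g ^ 2) ^ k) := hcomm.pow_right k
    have hx2 : ((g ^ 2) ^ k)⁻¹ * x * (g ^ 2) ^ k = x := by
      rw [mul_assoc, h2k.eq]; group
    have : g ^ b = (g ^ 2) ^ k * g := by rw [hk, ← pow_mul, pow_add, pow_one]
    rw [this, mul_inv_rev]
    calc g⁻¹ * ((g ^ 2) ^ k)⁻¹ * x * ((g ^ 2) ^ k * g)
        = g⁻¹ * (((g ^ 2) ^ k)⁻¹ * x * (g ^ 2) ^ k) * g := by group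
    _ = g⁻¹ * x * g := by rw [hx2]
    _ = x⁻¹ := hg
end

section
/- Let G be a finite group, N a normal subgroup, and suppose xN ∈ G/N is real in G/N with odd order. Then there exists a real element y ∈ G such that xN = yN. -/
open Subgroup QuotientGroup


section Helpers
variable {G : Type*} [Group G]

lemma invConj {a b : G} (h : b⁻¹ * a * b = a⁻¹) : b⁻¹ * a⁻¹ * b = a := by
  have := congrArg (fun z => z⁻¹) h
  simpa [mul_inv_rev, mul_assoc] using this

/-- conjugation by an odd power of an inverting element inverts -/
lemma oddConj {a b : G} (h : b⁻¹ * a * b = a⁻¹) {r : ℕ} (hr : Odd r) :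
    (b ^ r)⁻¹ * a * (b ^ r) = a⁻¹ := by
  have e1 : b⁻¹ * a⁻¹ * b = a := invConj h
  have hsq : (b * b)⁻¹ * a * (b * b) = a := by
    have : (b * b)⁻¹ * a * (b * b) = b⁻¹ * (b⁻¹ * a * b) * b := by group
    rw [this, h, e1]
  have h2 : ∀ t : ℕ, ((b * b) ^ t)⁻¹ * a * (b * b) ^ t = a := by
    intro t
    induction t with
    | zero => simp
    | succ t ih =>
        have : (b*b) ^ (t+1) = (b*b) ^ t * (b*b) := pow_succ _ _
        rw [this, mul_inv_rev]
        calc (b*b)⁻¹ * ((b*b) ^ t)⁻¹ * a * ((b*b) ^ t * (b*b))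
            = (b*b)⁻¹ * (((b*b) ^ t)⁻¹ * a * (b*b) ^ t) * (b*b) := by
              simp [mul_assoc]
          _ = (b*b)⁻¹ * a * (b*b) := by rw [ih]
          _ = a := hsq
  obtain ⟨t, ht⟩ := hr
  have hbr : b ^ r = (b * b) ^ t * b := by
    rw [ht, ← sq, ← pow_mul, ← pow_succ]
  rw [hbr, mul_inv_rev]
  calc b⁻¹ * (((b*b) ^ t)⁻¹) * a * ((b*b) ^ t * b)
      = b⁻¹ * (((b*b) ^ t)⁻¹ * a * (b*b) ^ t) * b := by simp [mul_assoc]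
    _ = b⁻¹ * a * b := by rw [h2 t]
    _ = a⁻¹ := h

/-- odd part of an element: a power `z^r` of odd order, with `r ≡ 1` mod every
odd divisor of `orderOf z`. -/
lemma exists_odd_part [Finite G] (z : G) :
    ∃ r : ℕ, Odd (orderOf (z ^ r)) ∧ ∀ d : ℕ, Odd d → d ∣ orderOf z → r ≡ 1 [MOD d] := by
  set n := orderOf z with hn
  have hn0 : n ≠ 0 := (orderOf_pos z).ne'
  set a := n.factorization 2 with ha
  set b := n / 2 ^ a with hb
  have hbodd : ¬ 2 ∣ b := Nat.not_dvd_ordCompl Nat.prime_two hn0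
  have hcop : (2 ^ a).Coprime b :=
    Nat.Coprime.pow_left a ((Nat.Prime.coprime_iff_not_dvd Nat.prime_two).mpr hbodd)
  have hfact : 2 ^ a * b = n := Nat.ordProj_mul_ordCompl_eq_self n 2
  obtain ⟨r, hr1, hr2⟩ := Nat.chineseRemainder hcop 0 1
  have h2r : 2 ^ a ∣ r := (Nat.modEq_zero_iff_dvd).mp hr1
  refine ⟨r, ?_, ?_⟩
  · have hdvd : orderOf (z ^ r) ∣ b := by
      apply orderOf_dvd_of_pow_eq_one
      rw [← pow_mul]
      apply orderOf_dvd_iff_pow_eq_one.mp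
      rw [← hn, ← hfact]
      exact mul_dvd_mul h2r dvd_rfl
    rcases Nat.even_or_odd (orderOf (z ^ r)) with he | ho
    · exact absurd (dvd_trans (even_iff_two_dvd.mp he) hdvd) hbodd
    · exact ho
  · intro d hd hdn
    have hd2 : d.Coprime (2 ^ a) :=
      Nat.Coprime.pow_right a
        (Nat.coprime_comm.mp ((Nat.Prime.coprime_iff_not_dvd Nat.prime_two).mpr
          (by intro h2d; rw [Nat.odd_iff] at hd; omega)))
    have hdb : d ∣ b := by
      have : d ∣ 2 ^ a * b := by rw [hfact]; exact hdn
      exact (Nat.Coprime.dvd_of_dvd_mul_left hd2 this)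
    exact Nat.ModEq.of_dvd hdb hr2

/-- two-part exponent: an odd exponent making the power a 2-element -/
lemma exists_two_part [Finite G] (z : G) :
    ∃ r k : ℕ, Odd r ∧ (z ^ r) ^ (2 ^ k) = 1 := by
  set n := orderOf z with hn
  have hn0 : n ≠ 0 := (orderOf_pos z).ne'
  set a := n.factorization 2 with ha
  refine ⟨n / 2 ^ a, a, ?_, ?_⟩
  · have hbodd : ¬ 2 ∣ n / 2 ^ a := Nat.not_dvd_ordCompl Nat.prime_two hn0
    rw [Nat.odd_iff]; omega
  · rw [← pow_mul]
    apply orderOf_dvd_iff_pow_eq_one.mp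
    have hfe : n / 2 ^ a * 2 ^ a = n := by
      rw [mul_comm]; exact Nat.ordProj_mul_ordCompl_eq_self n 2
    rw [← hn, hfe]

/-- a permutation of 2-power order of a finite set of odd cardinality has a fixed point -/
lemma exists_fixed_of_two_pow {α : Type*} [Finite α] (f : Equiv.Perm α) {k : ℕ}
    (hf : f ^ (2 ^ k) = 1) (hcard : ¬ 2 ∣ Nat.card α) : ∃ a, f a = a := by
  haveI : Fact (Nat.Prime 2) := ⟨Nat.prime_two⟩
  set H := Subgroup.zpowers f with hH
  have hfo : orderOf f ∣ 2 ^ k := orderOf_dvd_of_pow_eq_one hf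
  obtain ⟨m, -, hm⟩ := (Nat.dvd_prime_pow Nat.prime_two).mp hfo
  have hpg : IsPGroup 2 H := IsPGroup.of_card (by
    rw [Nat.card_zpowers, hm])
  have := hpg.nonempty_fixed_point_of_prime_not_dvd_card α hcard
  obtain ⟨a, hafix⟩ := this
  refine ⟨a, ?_⟩
  have hfx := (MulAction.mem_fixedPoints.mp hafix) ⟨f, Subgroup.mem_zpowers f⟩
  simpa [Equiv.Perm.smul_def] using hfx

end Helpers

section CaseA
variable {H : Type*} [Group H] [Finite H]

/-- Core case: the normal subgroup has odd cardinality. -/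
lemma caseA (M : Subgroup H) [M.Normal] (hModd : ¬ 2 ∣ Nat.card M)
    (c σ : H) (hc : Odd (orderOf c)) (hrel : σ⁻¹ * c * σ * c ∈ M) :
    ∃ z : H, Odd (orderOf z) ∧ (∃ h : H, h⁻¹ * z * h = z⁻¹) ∧
      ((z : H ⧸ M) = (c : H ⧸ M)) := by
  set π := QuotientGroup.mk' M with hπ
  have hmem : ∀ g w : H, (π g = π w) ↔ g⁻¹ * w ∈ M := by
    intro g w; rw [hπ]; simp only [QuotientGroup.mk'_apply]; exact QuotientGroup.eq
  have h1 : π σ⁻¹ * π c * π σ * π c = 1 := by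
    rw [← map_mul, ← map_mul, ← map_mul, QuotientGroup.mk'_apply, QuotientGroup.eq_one_iff]
    exact hrel
  have hq : (π σ)⁻¹ * π c * π σ = (π c)⁻¹ := by
    have := mul_eq_one_iff_eq_inv.mp h1
    simpa [map_inv] using this
  obtain ⟨r, k, hrodd, hs2k⟩ := exists_two_part σ
  set s := σ ^ r with hs
  have hqs : (π s)⁻¹ * π c * π s = (π c)⁻¹ := by
    have := oddConj hq hrodd
    simpa [map_pow, hs] using this
  have hqsinv : (π s)⁻¹ * (π c)⁻¹ * π s = π c := invConj hqs
  have hq3 : π s * (π c)⁻¹ * (π s)⁻¹ = π c := by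
    rw [← hqs]; group
  set α := {g : H // π g = π c} with hα
  have hcardα : Nat.card α = Nat.card M := by
    apply Nat.card_congr
    refine ⟨fun g => ⟨c⁻¹ * (g : H), ?_⟩, fun m => ⟨c * (m : H), ?_⟩, ?_, ?_⟩
    · have := (hmem _ _).mp g.2
      simpa [mul_inv_rev] using inv_mem this
    · apply (hmem _ _).mpr
      have : (c * (m : H))⁻¹ * c = (m : H)⁻¹ := by group
      rw [this]; exact inv_mem m.2
    · intro g; ext; simp
    · intro m; ext; simp
  have pf : ∀ g : α, π (s⁻¹ * (g : H)⁻¹ * s) = π c := by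
    intro g
    rw [map_mul, map_mul, map_inv, map_inv, g.2]
    exact hqsinv
  have pf' : ∀ g : α, π (s * (g : H)⁻¹ * s⁻¹) = π c := by
    intro g
    rw [map_mul, map_mul, map_inv, map_inv, g.2]
    exact hq3
  set f : Equiv.Perm α :=
    { toFun := fun g => ⟨s⁻¹ * (g : H)⁻¹ * s, pf g⟩
      invFun := fun g => ⟨s * (g : H)⁻¹ * s⁻¹, pf' g⟩
      left_inv := fun g => Subtype.ext (by show s * (s⁻¹ * (g : H)⁻¹ * s)⁻¹ * s⁻¹ = _; group)
      right_inv := fun g => Subtype.ext (by show s⁻¹ * (s * (g : H)⁻¹ * s⁻¹)⁻¹ * s = _; group) }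
    with hf
  have f_apply : ∀ g : α, ((f g : α) : H) = s⁻¹ * (g : H)⁻¹ * s := fun _ => rfl
  have f2_apply : ∀ g : α, (((f * f) g : α) : H) = (s * s)⁻¹ * (g : H) * (s * s) := by
    intro g
    rw [Equiv.Perm.mul_apply, f_apply (f g), f_apply g]
    group
  have claim2 : ∀ (m : ℕ) (g : α), (((f ^ (2 * m)) g : α) : H)
      = (s ^ (2 * m))⁻¹ * (g : H) * s ^ (2 * m) := by
    intro m
    induction m with
    | zero => intro g; simp
    | succ m ih =>
        intro g
        have hsplit : f ^ (2 * (m + 1)) = f ^ (2 * m) * (f * f) := by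
          rw [← pow_two, ← pow_add]; ring_nf
        rw [hsplit, Equiv.Perm.mul_apply, ih ((f * f) g), f2_apply g]
        have hpow : s ^ (2 * (m + 1)) = s ^ (2 * m) * (s * s) := by
          rw [← pow_two, ← pow_add]; ring_nf
        rw [hpow]
        group
  have hfpow : f ^ (2 ^ (k + 1)) = 1 := by
    have h2k : (2 : ℕ) ^ (k + 1) = 2 * 2 ^ k := by rw [pow_succ, mul_comm]
    rw [h2k]
    ext g
    have h := claim2 (2 ^ k) g
    have hsp : s ^ (2 * 2 ^ k) = 1 := by
      rw [mul_comm, pow_mul, hs2k, one_pow]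
    rw [hsp] at h
    rw [Equiv.Perm.one_apply]
    simpa using h
  obtain ⟨a, hfix⟩ := exists_fixed_of_two_pow f hfpow (by rw [hcardα]; exact hModd)
  have hfixval : s⁻¹ * (a : H)⁻¹ * s = (a : H) := congrArg Subtype.val hfix
  have hreal : s⁻¹ * (a : H) * s = (a : H)⁻¹ := by
    have h' : s⁻¹ * (a : H)⁻¹ * s = ((a : H)⁻¹)⁻¹ := by rw [inv_inv]; exact hfixval
    have := invConj h'
    rwa [inv_inv] at this
  refine ⟨(a : H), ?_, ⟨s, hreal⟩, ?_⟩
  · obtain ⟨d, hd⟩ : ∃ d, orderOf (π (a : H)) = d := ⟨_, rfl⟩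
    have hπac : π (a : H) = π c := a.2
    have hddvd : d ∣ orderOf c := by rw [← hd, hπac]; exact orderOf_map_dvd π c
    have hdodd : Odd d := by
      rcases Nat.even_or_odd d with he | ho
      · exfalso
        have h2 : 2 ∣ orderOf c := dvd_trans (even_iff_two_dvd.mp he) hddvd
        rw [Nat.odd_iff] at hc; omega
      · exact ho
    have hdz : d ∣ orderOf (a : H) := hd ▸ orderOf_map_dvd π (a : H)
    have hadM : ((a : H) ^ d) ∈ M := by
      have h0 : π ((a : H) ^ d) = 1 := by rw [map_pow, ← hd]; exact pow_orderOf_eq_one _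
      have h1' : π ((a : H) ^ d) = π 1 := by rw [map_one]; exact h0
      have := (hmem _ _).mp h1'
      simpa using inv_mem this
    have hodd2 : Odd (orderOf ((a : H) ^ d)) := by
      have hdvdM : orderOf ((a : H) ^ d) ∣ Nat.card M := Subgroup.orderOf_dvd_natCard M hadM
      rcases Nat.even_or_odd (orderOf ((a : H) ^ d)) with he | ho
      · exact absurd (dvd_trans (even_iff_two_dvd.mp he) hdvdM) hModd
      · exact ho
    have e1 : orderOf ((a : H) ^ d) = orderOf (a : H) / d := by
      rw [orderOf_pow, Nat.gcd_eq_right hdz]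
    have := Nat.odd_mul.mpr ⟨e1 ▸ hodd2, hdodd⟩
    rwa [Nat.div_mul_cancel hdz] at this
  · exact a.2
end CaseA

section CaseB1
variable {G : Type*} [Group G] [Finite G]

/-- Coprime abelian case: N an abelian 2-group, x of odd order, inverted mod N:
then x is itself real. -/
lemma caseB1 (N : Subgroup G) [N.Normal] {k : ℕ} (hcard : Nat.card N = 2 ^ k)
    (hab : ∀ a ∈ N, ∀ b ∈ N, a * b = b * a)
    (x σ : G) (hx : Odd (orderOf x)) (hrel : σ⁻¹ * x * σ * x ∈ N) :
    ∃ h : G, h⁻¹ * x * h = x⁻¹ := by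
  letI : CommGroup ↥N :=
    { (inferInstance : Group ↥N) with
      mul_comm := fun a b => Subtype.ext (hab a a.2 b b.2) }
  set u := orderOf x with hu
  set x' := σ⁻¹ * x⁻¹ * σ with hx'
  have hδmem : x' * x⁻¹ ∈ N := by
    have h1 : (σ⁻¹ * x * σ * x)⁻¹ ∈ N := inv_mem hrel
    have h2 : x * (σ⁻¹ * x * σ * x)⁻¹ * x⁻¹ ∈ N := by
      have := (‹N.Normal›).conj_mem _ h1 x
      exact this
    have : x * (σ⁻¹ * x * σ * x)⁻¹ * x⁻¹ = x' * x⁻¹ := by rw [hx']; group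
    rwa [this] at h2
  set δ : ↥N := ⟨x' * x⁻¹, hδmem⟩ with hδ
  -- conjugation by x as an endomorphism of N
  have hconjmem : ∀ n : ↥N, x * (n : G) * x⁻¹ ∈ N := fun n =>
    (‹N.Normal›).conj_mem _ n.2 x
  set φ : ↥N →* ↥N :=
    { toFun := fun n => ⟨x * (n : G) * x⁻¹, hconjmem n⟩
      map_one' := by ext; simp
      map_mul' := fun a b => by ext; show x * (↑a * ↑b) * x⁻¹ = (x*↑a*x⁻¹)*(x*↑b*x⁻¹); group }
    with hφ
  -- the cocycle partial norms
  set dd : ℕ → ↥N := fun j => Nat.rec 1 (fun _ p => δ * φ p) j with hdd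
  have hdd0 : dd 0 = 1 := rfl
  have hddsucc : ∀ j, dd (j + 1) = δ * φ (dd j) := fun j => rfl
  have hddval : ∀ j, ((dd j : G)) = x' ^ j * (x ^ j)⁻¹ := by
    intro j
    induction j with
    | zero => simp [hdd0]
    | succ j ih =>
        rw [hddsucc j]
        show (δ : G) * (x * (dd j : G) * x⁻¹) = _
        rw [ih, hδ]
        show x' * x⁻¹ * (x * (x' ^ j * (x ^ j)⁻¹) * x⁻¹) = _
        rw [pow_succ x' j, pow_succ x j]
        group
  have hddu : dd u = 1 := by
    apply Subtype.ext
    rw [hddval u]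
    have h1 : x' ^ u = σ⁻¹ * (x⁻¹) ^ u * σ := by
      rw [hx']
      have h2 : σ⁻¹ * x⁻¹ * σ = σ⁻¹ * x⁻¹ * (σ⁻¹)⁻¹ := by rw [inv_inv]
      rw [h2, conj_pow, inv_inv]
    have h4 : x ^ u = 1 := pow_orderOf_eq_one x
    have h3 : x' ^ u = 1 := by
      rw [h1, inv_pow, h4]
      group
    rw [h3, h4]
    simp
  set P : ↥N := ∏ j ∈ Finset.range u, dd j with hP
  have hφP : φ P = δ⁻¹ ^ u * P := by
    rw [hP, map_prod]
    have hcg : ∀ j ∈ Finset.range u, φ (dd j) = δ⁻¹ * dd (j + 1) := by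
      intro j _
      rw [hddsucc j, inv_mul_cancel_left]
    rw [Finset.prod_congr rfl hcg, Finset.prod_mul_distrib, Finset.prod_const,
      Finset.card_range]
    congr 1
    have h1 : ∏ j ∈ Finset.range u, dd (j + 1)
        = (∏ j ∈ Finset.range (u + 1), dd j) * (dd 0)⁻¹ := by
      rw [Finset.prod_range_succ']
      group
    rw [h1, Finset.prod_range_succ, hddu, hdd0]
    group
  have hδu : δ ^ u = P * (φ P)⁻¹ := by
    rw [hφP]
    group
  rcases eq_or_ne (orderOf δ) 1 with hm1 | hm
  · have hδ1 : δ = 1 := orderOf_eq_one_iff.mp hm1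
    have hδG : x' * x⁻¹ = 1 := by
      have := congrArg Subtype.val hδ1
      exact this
    have hx'x : x' = x := by
      have := mul_eq_one_iff_eq_inv.mp hδG
      simpa using this
    refine ⟨σ, ?_⟩
    have := congrArg (fun z : G => z⁻¹) hx'x
    rw [hx'] at this
    simpa [mul_inv_rev, mul_assoc] using this
  · have hmdvd : orderOf δ ∣ 2 ^ k := hcard ▸ orderOf_dvd_natCard δ
    have hm1lt : 1 < orderOf δ := by
      have := orderOf_pos δ
      omega
    have hcop : Nat.Coprime u (orderOf δ) := by
      apply Nat.Coprime.coprime_dvd_right hmdvd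
      apply Nat.Coprime.pow_right
      exact Nat.coprime_comm.mp ((Nat.Prime.coprime_iff_not_dvd Nat.prime_two).mpr
        (by rw [Nat.odd_iff] at hx; omega))
    obtain ⟨e, -, he⟩ := Nat.exists_mul_mod_eq_one_of_coprime hcop hm1lt
    have hδe : δ = (P * (φ P)⁻¹) ^ e := by
      rw [← hδu, ← pow_mul]
      have h5 : δ ^ (u * e) = δ ^ 1 := by
        apply pow_eq_pow_iff_modEq.mpr
        show u * e % orderOf δ = 1 % orderOf δ
        rw [he, Nat.one_mod_eq_one.mpr (by omega)]
      simpa using h5.symm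
    obtain ⟨n₀, hn₀⟩ : ∃ n₀ : ↥N, n₀ = P ^ e := ⟨_, rfl⟩
    have key : δ = n₀ * (φ n₀)⁻¹ := by
      rw [hδe, hn₀, mul_pow, inv_pow, ← map_pow]
    have keyG : x' * x⁻¹ = (n₀ : G) * (x * (n₀ : G) * x⁻¹)⁻¹ := by
      have := congrArg Subtype.val key
      exact this
    have hxn : x' = (n₀ : G) * x * (n₀ : G)⁻¹ := by
      calc x' = (x' * x⁻¹) * x := by group
        _ = ((n₀ : G) * (x * (n₀ : G) * x⁻¹)⁻¹) * x := by rw [keyG]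
        _ = (n₀ : G) * x * (n₀ : G)⁻¹ := by group
    refine ⟨σ * (n₀ : G), ?_⟩
    have hinv : σ⁻¹ * x * σ = (n₀ : G) * x⁻¹ * (n₀ : G)⁻¹ := by
      have := congrArg (fun z : G => z⁻¹) hxn
      rw [hx'] at this
      simpa [mul_inv_rev, mul_assoc] using this
    calc (σ * (n₀ : G))⁻¹ * x * (σ * (n₀ : G))
        = (n₀ : G)⁻¹ * (σ⁻¹ * x * σ) * (n₀ : G) := by group
      _ = x⁻¹ := by rw [hinv]; group
end CaseB1

lemma card_map_mk' {G : Type*} [Group G] [Finite G] (K N : Subgroup G) [K.Normal]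
    (hle : K ≤ N) :
    Nat.card (N.map (QuotientGroup.mk' K)) * Nat.card K = Nat.card N := by
  set ψ : ↥N →* G ⧸ K := (QuotientGroup.mk' K).comp N.subtype with hψ
  have hrange : ψ.range = N.map (QuotientGroup.mk' K) := by
    rw [hψ, MonoidHom.range_comp, Subgroup.subtype_range]
  have hker : ψ.ker = K.subgroupOf N := by
    ext a
    simp only [hψ, MonoidHom.mem_ker, MonoidHom.comp_apply, QuotientGroup.mk'_apply,
      QuotientGroup.eq_one_iff, Subgroup.mem_subgroupOf, Subgroup.coe_subtype]
  have h1 : Nat.card ↥N = Nat.card (↥N ⧸ ψ.ker) * Nat.card ψ.ker :=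
    Subgroup.card_eq_card_quotient_mul_card_subgroup ψ.ker
  have h2 : Nat.card (↥N ⧸ ψ.ker) = Nat.card ψ.range :=
    Nat.card_congr (QuotientGroup.quotientKerEquivRange ψ).toEquiv
  have h3 : Nat.card ψ.ker = Nat.card K := by
    rw [hker]; exact Nat.card_congr (Subgroup.subgroupOfEquivOfLe hle).toEquiv
  rw [h1, h2, h3, hrange]

lemma liftStep {G : Type*} [Group G] [Finite G] (K : Subgroup G) [K.Normal] (yq hq : G ⧸ K)
    (hodd : Odd (orderOf yq)) (hreal : hq⁻¹ * yq * hq = yq⁻¹) :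
    ∃ c t : G, Odd (orderOf c) ∧ ((c : G ⧸ K) = yq) ∧ t⁻¹ * c * t * c ∈ K := by
  obtain ⟨y₁, rfl⟩ := QuotientGroup.mk'_surjective K yq
  obtain ⟨t, rfl⟩ := QuotientGroup.mk'_surjective K hq
  obtain ⟨r, hro, hrc⟩ := exists_odd_part y₁
  have hd : orderOf (QuotientGroup.mk' K y₁) ∣ orderOf y₁ := orderOf_map_dvd _ _
  have hodd' : Odd (orderOf (QuotientGroup.mk' K y₁)) := hodd
  have hr1 : r ≡ 1 [MOD orderOf (QuotientGroup.mk' K y₁)] := hrc _ hodd' hd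
  have hcoset : (QuotientGroup.mk' K) (y₁ ^ r) = QuotientGroup.mk' K y₁ := by
    have : (QuotientGroup.mk' K) (y₁ ^ r) = (QuotientGroup.mk' K y₁) ^ 1 := by
      rw [map_pow]; exact pow_eq_pow_iff_modEq.mpr hr1
    simpa using this
  refine ⟨y₁ ^ r, t, hro, hcoset, ?_⟩
  apply (QuotientGroup.eq_one_iff _).mp
  have : (QuotientGroup.mk' K) (t⁻¹ * y₁ ^ r * t * (y₁ ^ r)) = 1 := by
    rw [map_mul, map_mul, map_mul, map_inv, hcoset, hreal]
    simp
  exact this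

lemma center_map_normal {G : Type*} [Group G] (N : Subgroup G) [hN : N.Normal] :
    ((Subgroup.center ↥N).map N.subtype).Normal := by
  constructor
  intro z hz g
  rw [Subgroup.mem_map] at hz ⊢
  obtain ⟨z', hz', hval⟩ := hz
  have hzN : z ∈ N := by rw [← hval]; exact (z' : ↥N).2
  refine ⟨⟨g * z * g⁻¹, hN.conj_mem z hzN g⟩, ?_, rfl⟩
  rw [Subgroup.mem_center_iff]
  intro b
  apply Subtype.ext
  show (b : G) * (g * z * g⁻¹) = (g * z * g⁻¹) * (b : G)
  have hbg : (g⁻¹ * (b : G) * g) ∈ N := by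
    have := hN.conj_mem (b : G) b.2 g⁻¹
    simpa using this
  have hcomm := Subgroup.mem_center_iff.mp hz' ⟨g⁻¹ * (b : G) * g, hbg⟩
  have hcommval : (g⁻¹ * (b : G) * g) * z = z * (g⁻¹ * (b : G) * g) := by
    have h := congrArg Subtype.val hcomm
    rw [← hval]
    exact h
  calc (b : G) * (g * z * g⁻¹) = g * ((g⁻¹ * (b : G) * g) * z) * g⁻¹ := by group
    _ = g * (z * (g⁻¹ * (b : G) * g)) * g⁻¹ := by rw [hcommval]
    _ = (g * z * g⁻¹) * (b : G) := by group

lemma odd_of_dvd {a b : ℕ} (h : a ∣ b) (hb : Odd b) : Odd a := by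
  rcases Nat.even_or_odd a with he | ho
  · exfalso
    have h2 : 2 ∣ b := dvd_trans (even_iff_two_dvd.mp he) h
    rw [Nat.odd_iff] at hb; omega
  · exact ho

universe u

theorem mainLemma : ∀ (n : ℕ), ∀ {G : Type u} [Group G] [Finite G],
    ∀ (N : Subgroup G) [N.Normal] (x σ : G), Nat.card N = n → Odd (orderOf x) →
    σ⁻¹ * x * σ * x ∈ N →
    ∃ y : G, Odd (orderOf y) ∧ (∃ h : G, h⁻¹ * y * h = y⁻¹) ∧
      ((y : G ⧸ N) = (x : G ⧸ N)) := by
  intro n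
  induction n using Nat.strong_induction_on with
  | _ n IH =>
    intro G _ _ N _ x σ hcard hx hrel
    haveI : Fact (Nat.Prime 2) := ⟨Nat.prime_two⟩
    by_cases hodd_n : Odd n
    · have hM : ¬ 2 ∣ Nat.card N := by rw [hcard]; rw [Nat.odd_iff] at hodd_n; omega
      exact caseA N hM x σ hx hrel
    · have hn0 : n ≠ 0 := by
        have : 0 < Nat.card N := Nat.card_pos
        omega
      have hev : 2 ∣ n := by rw [Nat.odd_iff] at hodd_n; omega
      by_cases h2grp : ∃ k, n = 2 ^ k
      · obtain ⟨k, hk⟩ := h2grp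
        by_cases habel : ∀ a ∈ N, ∀ b ∈ N, a * b = b * a
        · obtain ⟨h, hh⟩ := caseB1 N (k := k) (hcard.trans hk) habel x σ hx hrel
          exact ⟨x, hx, ⟨h, hh⟩, rfl⟩
        · -- CASE B2
          haveI hNnt : Nontrivial (↥N) := by
            apply Finite.one_lt_card_iff_nontrivial.mp
            rw [hcard]; omega
          have hpg : IsPGroup 2 (↥N) := IsPGroup.of_card (hcard.trans hk)
          haveI hZtriv : Nontrivial (Subgroup.center (↥N)) := hpg.center_nontrivial
          haveI hZ₀n : ((Subgroup.center (↥N)).map N.subtype).Normal := center_map_normal N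
          have hZ₀le : (Subgroup.center (↥N)).map N.subtype ≤ N := Subgroup.map_subtype_le _
          have hcZ₀eq : Nat.card (Subgroup.center (↥N))
              = Nat.card ((Subgroup.center (↥N)).map N.subtype) :=
            Nat.card_congr (Subgroup.equivMapOfInjective _ N.subtype
              N.subtype_injective).toEquiv
          have hcZ₀ : 1 < Nat.card ((Subgroup.center (↥N)).map N.subtype) := by
            rw [← hcZ₀eq]
            exact Finite.one_lt_card_iff_nontrivial.mpr hZtriv
          have hcZ₀dvd : Nat.card ((Subgroup.center (↥N)).map N.subtype) ∣ n := by
            rw [← hcard]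
            have h1 := Subgroup.card_subgroup_dvd_card
              (((Subgroup.center (↥N)).map N.subtype).subgroupOf N)
            rwa [Nat.card_congr (Subgroup.subgroupOfEquivOfLe hZ₀le).toEquiv] at h1
          have hZ₀ne : Nat.card ((Subgroup.center (↥N)).map N.subtype) ≠ n := by
            intro hEq
            apply habel
            have htop : ((Subgroup.center (↥N)).map N.subtype).subgroupOf N = ⊤ := by
              apply Subgroup.eq_top_of_card_eq
              rw [Nat.card_congr (Subgroup.subgroupOfEquivOfLe hZ₀le).toEquiv, hEq, hcard]
            intro a ha b hb
            have haZ : a ∈ (Subgroup.center (↥N)).map N.subtype := by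
              have hmem : (⟨a, ha⟩ : ↥N)
                  ∈ ((Subgroup.center (↥N)).map N.subtype).subgroupOf N := by
                rw [htop]; exact Subgroup.mem_top _
              exact (Subgroup.mem_subgroupOf).mp hmem
            obtain ⟨z', hz', hval⟩ := Subgroup.mem_map.mp haZ
            have hcomm := Subgroup.mem_center_iff.mp hz' ⟨b, hb⟩
            have hval2 := congrArg Subtype.val hcomm
            have hba : b * a = a * b := by rw [← hval]; exact hval2
            exact hba.symm
          have hZ₀lt : Nat.card ((Subgroup.center (↥N)).map N.subtype) < n :=
            Nat.lt_of_le_of_ne (Nat.le_of_dvd (by omega) hcZ₀dvd) hZ₀ne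
          haveI hN'n : (N.map (QuotientGroup.mk' ((Subgroup.center (↥N)).map N.subtype))).Normal :=
            Subgroup.Normal.map ‹N.Normal› _ (QuotientGroup.mk'_surjective _)
          have hc1 : Nat.card (N.map (QuotientGroup.mk' ((Subgroup.center (↥N)).map N.subtype)))
              * Nat.card ((Subgroup.center (↥N)).map N.subtype) = n := by
            rw [← hcard]; exact card_map_mk' _ N hZ₀le
          have hN'lt : Nat.card (N.map (QuotientGroup.mk'
              ((Subgroup.center (↥N)).map N.subtype))) < n := by
            have hpos : 0 < Nat.card (N.map (QuotientGroup.mk'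
              ((Subgroup.center (↥N)).map N.subtype))) := Nat.card_pos
            nlinarith
          have hxodd' : Odd (orderOf ((QuotientGroup.mk'
              ((Subgroup.center (↥N)).map N.subtype)) x)) :=
            odd_of_dvd (orderOf_map_dvd _ _) hx
          have hrel' : ((QuotientGroup.mk' ((Subgroup.center (↥N)).map N.subtype)) σ)⁻¹ *
              ((QuotientGroup.mk' ((Subgroup.center (↥N)).map N.subtype)) x) *
              ((QuotientGroup.mk' ((Subgroup.center (↥N)).map N.subtype)) σ) *
              ((QuotientGroup.mk' ((Subgroup.center (↥N)).map N.subtype)) x)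
              ∈ N.map (QuotientGroup.mk' ((Subgroup.center (↥N)).map N.subtype)) := by
            rw [← map_inv, ← map_mul, ← map_mul, ← map_mul]
            exact Subgroup.mem_map_of_mem _ hrel
          obtain ⟨yq, hyqodd, ⟨hq, hyqreal⟩, hyqcoset⟩ :=
            IH _ hN'lt (N.map (QuotientGroup.mk' ((Subgroup.center (↥N)).map N.subtype)))
              ((QuotientGroup.mk' ((Subgroup.center (↥N)).map N.subtype)) x)
              ((QuotientGroup.mk' ((Subgroup.center (↥N)).map N.subtype)) σ) rfl hxodd' hrel'
          obtain ⟨c₂, t, hc₂odd, hc₂coset, hc₂rel⟩ :=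
            liftStep ((Subgroup.center (↥N)).map N.subtype) yq hq hyqodd hyqreal
          obtain ⟨y, hyodd, hyreal, hycoset⟩ :=
            IH _ hZ₀lt ((Subgroup.center (↥N)).map N.subtype) c₂ t rfl hc₂odd hc₂rel
          refine ⟨y, hyodd, hyreal, ?_⟩
          have m1 : y⁻¹ * c₂ ∈ (Subgroup.center (↥N)).map N.subtype :=
            QuotientGroup.eq.mp hycoset
          have m2 : c₂⁻¹ * x ∈ N := by
            have h1 : ((c₂⁻¹ * x : G) : G ⧸ (Subgroup.center (↥N)).map N.subtype)
                ∈ N.map (QuotientGroup.mk' ((Subgroup.center (↥N)).map N.subtype)) := by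
              rw [QuotientGroup.mk_mul, QuotientGroup.mk_inv, hc₂coset]
              exact QuotientGroup.eq.mp hyqcoset
            obtain ⟨w, hwN, hw⟩ := Subgroup.mem_map.mp h1
            have h2 : w⁻¹ * (c₂⁻¹ * x) ∈ (Subgroup.center (↥N)).map N.subtype :=
              QuotientGroup.eq.mp
                (show ((w : G) : G ⧸ (Subgroup.center (↥N)).map N.subtype)
                  = ((c₂⁻¹ * x : G) : G ⧸ (Subgroup.center (↥N)).map N.subtype) from hw)
            have h3 : c₂⁻¹ * x = w * (w⁻¹ * (c₂⁻¹ * x)) := by group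
            rw [h3]
            exact N.mul_mem hwN (hZ₀le h2)
          apply QuotientGroup.eq.mpr
          have h4 : y⁻¹ * x = (y⁻¹ * c₂) * (c₂⁻¹ * x) := by group
          rw [h4]
          exact N.mul_mem (hZ₀le m1) m2
      · -- CASE C : Frattini
        obtain ⟨P⟩ : Nonempty (Sylow 2 (↥N)) := inferInstance
        have hfrattini : Subgroup.normalizer (Subgroup.map N.subtype (P : Subgroup (↥N)) : Set G) ⊔ N = ⊤ :=
          Sylow.normalizer_sup_eq_top P
        set P₀ : Subgroup G := Subgroup.map N.subtype (P : Subgroup (↥N)) with hP₀def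
        set L : Subgroup G := Subgroup.normalizer (P₀ : Set G) with hLdef
        have hP₀le : P₀ ≤ N := Subgroup.map_subtype_le _
        have hP₀L : P₀ ≤ L := Subgroup.le_normalizer
        have hcP₀ : Nat.card P₀ = 2 ^ (n.factorization 2) := by
          rw [← Nat.card_congr (Subgroup.equivMapOfInjective _ N.subtype
            N.subtype_injective).toEquiv, Sylow.card_eq_multiplicity, hcard]
        have hw1 : 1 ≤ n.factorization 2 :=
          Nat.Prime.factorization_pos_of_dvd Nat.prime_two hn0 hev
        have hdecomp : ∀ g : G, ∃ l ∈ L, l⁻¹ * g ∈ N := by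
          intro g
          have hg : g ∈ ((L ⊔ N : Subgroup G) : Set G) := by
            rw [hfrattini]; trivial
          rw [Subgroup.mul_normal] at hg
          obtain ⟨a, ha, b, hb, hab⟩ := hg
          refine ⟨a, ha, ?_⟩
          rw [← hab]
          simpa using hb
        obtain ⟨l, hlL, hlx⟩ := hdecomp x
        obtain ⟨ls, hlsL, hlsσ⟩ := hdecomp σ
        have hmkl : (QuotientGroup.mk' N) l = (QuotientGroup.mk' N) x :=
          QuotientGroup.eq.mpr hlx
        have hmkls : (QuotientGroup.mk' N) ls = (QuotientGroup.mk' N) σ :=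
          QuotientGroup.eq.mpr hlsσ
        obtain ⟨r, hro, hrc⟩ := exists_odd_part l
        have hcL : l ^ r ∈ L := L.pow_mem hlL r
        have hmkc : (QuotientGroup.mk' N) (l ^ r) = (QuotientGroup.mk' N) x := by
          have hOl : orderOf ((QuotientGroup.mk' N) l) ∣ orderOf l := orderOf_map_dvd _ _
          have hOodd : Odd (orderOf ((QuotientGroup.mk' N) l)) := by
            rw [hmkl]
            exact odd_of_dvd (orderOf_map_dvd _ _) hx
          have hr1 : r ≡ 1 [MOD orderOf ((QuotientGroup.mk' N) l)] := hrc _ hOodd hOl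
          have h5 : (QuotientGroup.mk' N) (l ^ r) = ((QuotientGroup.mk' N) l) ^ 1 := by
            rw [map_pow]; exact pow_eq_pow_iff_modEq.mpr hr1
          rw [h5, pow_one, hmkl]
        obtain ⟨r2, k2, hr2odd, hs2k⟩ := exists_two_part ls
        have hsL : ls ^ r2 ∈ L := L.pow_mem hlsL r2
        have hrelG : (ls ^ r2)⁻¹ * (l ^ r) * (ls ^ r2) * (l ^ r) ∈ N := by
          have hq1 : ((QuotientGroup.mk' N) σ)⁻¹ * ((QuotientGroup.mk' N) x) *
              ((QuotientGroup.mk' N) σ) = ((QuotientGroup.mk' N) x)⁻¹ := by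
            have h6 : (QuotientGroup.mk' N) (σ⁻¹ * x * σ * x) = 1 := by
              rw [QuotientGroup.mk'_apply, QuotientGroup.eq_one_iff]; exact hrel
            rw [map_mul, map_mul, map_mul, map_inv] at h6
            have := mul_eq_one_iff_eq_inv.mp h6
            simpa using this
          have hq2 := oddConj hq1 hr2odd
          apply (QuotientGroup.eq_one_iff _).mp
          show ((((ls ^ r2)⁻¹ * (l ^ r) * (ls ^ r2) * (l ^ r) : G)) : G ⧸ N) = 1
          have h7 : (QuotientGroup.mk' N) ((ls ^ r2)⁻¹ * (l ^ r) * (ls ^ r2) * (l ^ r)) = 1 := by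
            rw [map_mul, map_mul, map_mul, map_inv, hmkc, map_pow, hmkls]
            calc ((QuotientGroup.mk' N) σ ^ r2)⁻¹ * (QuotientGroup.mk' N) x *
                  (QuotientGroup.mk' N) σ ^ r2 * (QuotientGroup.mk' N) x
                = (((QuotientGroup.mk' N) σ ^ r2)⁻¹ * (QuotientGroup.mk' N) x *
                    (QuotientGroup.mk' N) σ ^ r2) * (QuotientGroup.mk' N) x := by group
              _ = ((QuotientGroup.mk' N) x)⁻¹ * (QuotientGroup.mk' N) x := by rw [hq2]
              _ = 1 := by group
          exact h7
        haveI hP'n : ((P₀.subgroupOf L)).Normal := Subgroup.normal_in_normalizer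
        haveI hM'n : ((N.subgroupOf L)).Normal := Subgroup.normal_subgroupOf
        have hP'M' : P₀.subgroupOf L ≤ N.subgroupOf L := fun a ha =>
          (Subgroup.mem_subgroupOf).mpr (hP₀le ((Subgroup.mem_subgroupOf).mp ha))
        haveI hMqn : ((N.subgroupOf L).map (QuotientGroup.mk' (P₀.subgroupOf L))).Normal :=
          Subgroup.Normal.map hM'n _ (QuotientGroup.mk'_surjective _)
        have hcP' : Nat.card (P₀.subgroupOf L) = 2 ^ (n.factorization 2) := by
          rw [← hcP₀]
          exact Nat.card_congr (Subgroup.subgroupOfEquivOfLe hP₀L).toEquiv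
        have hcM' : Nat.card (N.subgroupOf L) = Nat.card ((N ⊓ L : Subgroup G)) := by
          rw [← Subgroup.inf_subgroupOf_right N L]
          exact Nat.card_congr (Subgroup.subgroupOfEquivOfLe inf_le_right).toEquiv
        have hMqP' : Nat.card ((N.subgroupOf L).map (QuotientGroup.mk' (P₀.subgroupOf L)))
            * Nat.card (P₀.subgroupOf L) = Nat.card (N.subgroupOf L) :=
          card_map_mk' _ _ hP'M'
        have hNLdvd : Nat.card ((N ⊓ L : Subgroup G)) ∣ n := by
          rw [← hcard]
          have h8 := Subgroup.card_subgroup_dvd_card ((N ⊓ L).subgroupOf N)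
          rwa [Nat.card_congr (Subgroup.subgroupOfEquivOfLe inf_le_left).toEquiv] at h8
        have hMdvd : Nat.card ((N.subgroupOf L).map (QuotientGroup.mk' (P₀.subgroupOf L)))
            * 2 ^ (n.factorization 2) ∣ n := by
          rw [← hcP', hMqP', hcM']; exact hNLdvd
        have hMqodd : ¬ 2 ∣ Nat.card ((N.subgroupOf L).map
            (QuotientGroup.mk' (P₀.subgroupOf L))) := by
          intro h2
          obtain ⟨m', hm'⟩ := h2
          have h9 : 2 ^ (n.factorization 2 + 1) ∣ n := by
            apply dvd_trans _ hMdvd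
            rw [hm', pow_succ]
            exact ⟨m', by ring⟩
          rw [Nat.Prime.pow_dvd_iff_le_factorization Nat.prime_two hn0] at h9
          omega
        have hMqlt : Nat.card ((N.subgroupOf L).map (QuotientGroup.mk' (P₀.subgroupOf L)))
            < n := by
          have hP'2 : 2 ≤ 2 ^ (n.factorization 2) := by
            calc (2:ℕ) = 2 ^ 1 := rfl
              _ ≤ 2 ^ (n.factorization 2) := Nat.pow_le_pow_right (by norm_num) hw1
          have hle2 : Nat.card ((N.subgroupOf L).map (QuotientGroup.mk' (P₀.subgroupOf L)))
              * 2 ^ (n.factorization 2) ≤ n := Nat.le_of_dvd (by omega) hMdvd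
          have hpos : 0 < Nat.card ((N.subgroupOf L).map
            (QuotientGroup.mk' (P₀.subgroupOf L))) := Nat.card_pos
          nlinarith
        have hP'lt : Nat.card (P₀.subgroupOf L) < n := by
          rw [hcP']
          have hdvd2 : 2 ^ (n.factorization 2) ∣ n := Nat.ordProj_dvd n 2
          have hne : 2 ^ (n.factorization 2) ≠ n := fun hEq => h2grp ⟨_, hEq.symm⟩
          exact Nat.lt_of_le_of_ne (Nat.le_of_dvd (by omega) hdvd2) hne
        -- elements inside L
        have hsoc := orderOf_injective L.subtype L.subtype_injective (⟨l ^ r, hcL⟩ : ↥L)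
        have hcLodd : Odd (orderOf (⟨l ^ r, hcL⟩ : ↥L)) := by
          rw [← hsoc]; exact hro
        have hordc : Odd (orderOf ((QuotientGroup.mk' (P₀.subgroupOf L))
            (⟨l ^ r, hcL⟩ : ↥L))) :=
          odd_of_dvd (orderOf_map_dvd _ _) hcLodd
        have hrelL : ((QuotientGroup.mk' (P₀.subgroupOf L)) (⟨ls ^ r2, hsL⟩ : ↥L))⁻¹ *
            ((QuotientGroup.mk' (P₀.subgroupOf L)) (⟨l ^ r, hcL⟩ : ↥L)) *
            ((QuotientGroup.mk' (P₀.subgroupOf L)) (⟨ls ^ r2, hsL⟩ : ↥L)) *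
            ((QuotientGroup.mk' (P₀.subgroupOf L)) (⟨l ^ r, hcL⟩ : ↥L))
            ∈ (N.subgroupOf L).map (QuotientGroup.mk' (P₀.subgroupOf L)) := by
          rw [← map_inv, ← map_mul, ← map_mul, ← map_mul]
          apply Subgroup.mem_map_of_mem
          apply (Subgroup.mem_subgroupOf).mpr
          exact hrelG
        obtain ⟨zq, hzqodd, ⟨hq1w, hzqreal⟩, hzqcoset⟩ :=
          IH _ hMqlt ((N.subgroupOf L).map (QuotientGroup.mk' (P₀.subgroupOf L)))
            ((QuotientGroup.mk' (P₀.subgroupOf L)) ⟨l ^ r, hcL⟩)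
            ((QuotientGroup.mk' (P₀.subgroupOf L)) ⟨ls ^ r2, hsL⟩) rfl hordc hrelL
        obtain ⟨c₂, t, hc₂odd, hc₂coset, hc₂rel⟩ :=
          liftStep (P₀.subgroupOf L) zq hq1w hzqodd hzqreal
        obtain ⟨yL, hyLodd, ⟨h2w, hyLreal⟩, hyLcoset⟩ :=
          IH _ hP'lt (P₀.subgroupOf L) c₂ t rfl hc₂odd hc₂rel
        refine ⟨((yL : ↥L) : G), ?_, ⟨((h2w : ↥L) : G), ?_⟩, ?_⟩
        · have ho := orderOf_injective L.subtype L.subtype_injective yL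
          rw [← ho] at hyLodd
          exact hyLodd
        · exact congrArg Subtype.val hyLreal
        · apply QuotientGroup.eq.mpr
          have m1 : ((yL⁻¹ * c₂ : ↥L) : G) ∈ N := by
            have h10 : yL⁻¹ * c₂ ∈ P₀.subgroupOf L := QuotientGroup.eq.mp hyLcoset
            exact hP₀le ((Subgroup.mem_subgroupOf).mp h10)
          have m2 : ((c₂⁻¹ * ⟨l ^ r, hcL⟩ : ↥L) : G) ∈ N := by
            have h11 : ((c₂⁻¹ * ⟨l ^ r, hcL⟩ : ↥L) : ↥L ⧸ (P₀.subgroupOf L))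
                ∈ (N.subgroupOf L).map (QuotientGroup.mk' (P₀.subgroupOf L)) := by
              rw [QuotientGroup.mk_mul, QuotientGroup.mk_inv, hc₂coset]
              exact QuotientGroup.eq.mp hzqcoset
            obtain ⟨w, hwN, hw⟩ := Subgroup.mem_map.mp h11
            have h12 : w⁻¹ * (c₂⁻¹ * ⟨l ^ r, hcL⟩) ∈ P₀.subgroupOf L :=
              QuotientGroup.eq.mp
                (show ((w : ↥L) : ↥L ⧸ (P₀.subgroupOf L))
                  = ((c₂⁻¹ * (⟨l ^ r, hcL⟩ : ↥L) : ↥L) : ↥L ⧸ (P₀.subgroupOf L)) from hw)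
            have h13 : (c₂⁻¹ * (⟨l ^ r, hcL⟩ : ↥L) : ↥L)
                = w * (w⁻¹ * (c₂⁻¹ * ⟨l ^ r, hcL⟩)) := by group
            rw [h13]
            have hwN' : ((w : ↥L) : G) ∈ N := (Subgroup.mem_subgroupOf).mp hwN
            have h14 : ((w⁻¹ * (c₂⁻¹ * ⟨l ^ r, hcL⟩) : ↥L) : G) ∈ N :=
              hP₀le ((Subgroup.mem_subgroupOf).mp h12)
            exact N.mul_mem hwN' h14
          have m3 : (l ^ r)⁻¹ * x ∈ N := QuotientGroup.eq.mp hmkc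
          have hfinal : ((yL : ↥L) : G)⁻¹ * x =
              ((yL⁻¹ * c₂ : ↥L) : G) * ((c₂⁻¹ * ⟨l ^ r, hcL⟩ : ↥L) : G) * ((l ^ r)⁻¹ * x) := by
            push_cast
            group
          rw [hfinal]
          exact N.mul_mem (N.mul_mem m1 m2) m3


theorem stmt_2 {G : Type*} [Group G] [Finite G] (N : Subgroup G) [N.Normal] (x : G)
    (hreal : IsReal ((x : G ⧸ N)))
    (hodd : Odd (orderOf (x : G ⧸ N))) :
    ∃ y : G, IsReal y ∧ (x : G ⧸ N) = (y : G ⧸ N) := by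
  obtain ⟨gq, hg⟩ := hreal
  obtain ⟨σ, hσ⟩ := QuotientGroup.mk'_surjective N gq
  rw [← hσ] at hg
  obtain ⟨r, hro, hrc⟩ := exists_odd_part x
  have hOdvd : orderOf ((x : G ⧸ N)) ∣ orderOf x := orderOf_map_dvd (QuotientGroup.mk' N) x
  have hr1 : r ≡ 1 [MOD orderOf ((x : G ⧸ N))] := hrc _ hodd hOdvd
  have hmkxr : ((x ^ r : G) : G ⧸ N) = (x : G ⧸ N) := by
    have h0 : ((x : G ⧸ N)) ^ r = ((x : G ⧸ N)) ^ 1 := pow_eq_pow_iff_modEq.mpr hr1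
    have h1 : ((x ^ r : G) : G ⧸ N) = ((x : G ⧸ N)) ^ r := by
      exact map_pow (QuotientGroup.mk' N) x r
    rw [h1, h0, pow_one]
  have hrel : σ⁻¹ * (x ^ r) * σ * (x ^ r) ∈ N := by
    apply (QuotientGroup.eq_one_iff _).mp
    rw [QuotientGroup.mk_mul, QuotientGroup.mk_mul, QuotientGroup.mk_mul,
      QuotientGroup.mk_inv, hmkxr]
    have hg' : ((σ : G ⧸ N))⁻¹ * (x : G ⧸ N) * (σ : G ⧸ N) = ((x : G ⧸ N))⁻¹ := hg
    rw [hg']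
    group
  obtain ⟨y, hyodd, ⟨h, hreal'⟩, hycoset⟩ := mainLemma (Nat.card N) N (x ^ r) σ rfl hro hrel
  exact ⟨y, ⟨h, hreal'⟩, (hycoset.trans hmkxr).symm⟩
end

section
/- If a 2-group Q acts non-trivially (by automorphisms) on a finite group G, then there exist 1 ≠ x ∈ G and q ∈ Q such that x^q = x⁻¹. -/
theorem stmt_3 {Q G : Type*} [Group Q] [Finite Q] [Group G] [Finite G]
    (hQ : IsPGroup 2 Q) (φ : Q →* MulAut G) (hφ : ∃ q : Q, φ q ≠ 1) :
    ∃ x : G, x ≠ 1 ∧ ∃ q : Q, φ q x = x⁻¹ := by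
  obtain ⟨q, hq⟩ := hφ
  obtain ⟨n, hn⟩ := hQ q
  have hpow : (φ q) ^ (2 ^ n) = 1 := by
    rw [← map_pow, hn, map_one]
  have hdvd : orderOf (φ q) ∣ 2 ^ n := orderOf_dvd_of_pow_eq_one hpow
  obtain ⟨m, hm, horder⟩ := (Nat.dvd_prime_pow Nat.prime_two).mp hdvd
  have hm1 : 1 ≤ m := by
    rcases Nat.eq_zero_or_pos m with h0 | h
    · exfalso
      apply hq
      have : orderOf (φ q) = 1 := by simp [horder, h0]
      exact orderOf_eq_one_iff.mp this
    · exact h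
  set q' : Q := q ^ (2 ^ (m - 1)) with hq'
  set β : MulAut G := φ q' with hβ
  have hβq : β = (φ q) ^ (2 ^ (m - 1)) := by rw [hβ, hq', map_pow]
  have hβne : β ≠ 1 := by
    rw [hβq]
    intro h
    have : orderOf (φ q) ∣ 2 ^ (m - 1) := orderOf_dvd_of_pow_eq_one h
    rw [horder] at this
    have := Nat.pow_dvd_pow_iff_le_right (by norm_num : 1 < 2) |>.mp this
    omega
  have hβ2 : β * β = 1 := by
    rw [hβq, ← pow_add]
    have : 2 ^ (m - 1) + 2 ^ (m - 1) = 2 ^ m := by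
      rw [← two_mul, ← pow_succ']
      congr 1
      omega
    rw [this, ← horder, pow_orderOf_eq_one]
  obtain ⟨g, hg⟩ : ∃ g : G, β g ≠ g := by
    by_contra h
    push_neg at h
    exact hβne (by ext x; simpa using h x)
  refine ⟨g⁻¹ * β g, ?_, q', ?_⟩
  · intro h
    apply hg
    have := mul_eq_one_iff_eq_inv.mp h
    exact (inv_injective this).symm
  · have h2 : β (β g) = g := by
      have := congrArg (fun f : MulAut G => f g) hβ2
      simpa using this
    show β (g⁻¹ * β g) = _
    rw [map_mul, map_inv, h2, mul_inv_rev, inv_inv]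
end

section
/- Let G = K ⋊ Q be a finite group with Q a Sylow 2-subgroup having a unique involution z, K the normal 2-complement, O^{2'}(G) = G, and C_K(z) = C_K(Q). Then K is abelian if and only if C_K(z) = 1. -/
open scoped Pointwise

theorem stmt_8 {G : Type*} [Group G] [Finite G] (K : Subgroup G) [K.Normal]
    (Q : Sylow 2 G) (z : G) (hz : z ∈ Q) (hz2 : orderOf z = 2)
    (huniq : ∀ w ∈ Q, orderOf w = 2 → w = z)
    (hKodd : Odd (Nat.card K)) (hquot : IsPGroup 2 (G ⧸ K))
    (hO : ∀ N : Subgroup G, N.Normal → Odd N.index → N = ⊤)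
    (hcent : K ⊓ Subgroup.centralizer {z} = K ⊓ Subgroup.centralizer (Q : Set G)) :
    (∀ a b : G, a ∈ K → b ∈ K → a * b = b * a) ↔ K ⊓ Subgroup.centralizer {z} = ⊥ := by
  have : Fact (Nat.Prime 2) := ⟨Nat.prime_two⟩
  have hzz : z * z = 1 := by
    have := pow_orderOf_eq_one z
    rwa [hz2, pow_two] at this
  have hzi : z⁻¹ = z := by
    rw [inv_eq_iff_mul_eq_one, hzz]
  have hconjK : ∀ k ∈ K, z * k * z⁻¹ ∈ K := fun k hk =>
    Subgroup.Normal.conj_mem ‹K.Normal› k hk z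
  -- odd order of elements of K
  have hoddK : ∀ x ∈ K, Odd (orderOf x) := by
    intro x hx
    have hdvd : orderOf x ∣ Nat.card K := Subgroup.orderOf_dvd_natCard K hx
    rw [Nat.odd_iff] at hKodd ⊢
    rcases Nat.mod_two_eq_zero_or_one (orderOf x) with h | h
    · exfalso
      have h2 : 2 ∣ orderOf x := Nat.dvd_of_mod_eq_zero h
      have : 2 ∣ Nat.card K := h2.trans hdvd
      omega
    · exact h
  -- Q ∩ K is trivial
  have hQK : ∀ x ∈ (Q : Subgroup G), x ∈ K → x = 1 := by
    intro x hxQ hxK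
    have h2 : ∃ k, orderOf x = 2 ^ k := by
      obtain ⟨k, hk⟩ := (IsPGroup.iff_orderOf.mp Q.2) ⟨x, hxQ⟩
      refine ⟨k, ?_⟩
      have := Subgroup.orderOf_coe (⟨x, hxQ⟩ : (Q : Subgroup G))
      rw [← hk]
      exact this
    obtain ⟨k, hk⟩ := h2
    have hodd := hoddK x hxK
    rw [hk] at hodd
    have hk0 : k = 0 := by
      by_contra hne
      have : 2 ∣ 2 ^ k := dvd_pow_self 2 hne
      rw [Nat.odd_iff] at hodd
      omega
    rw [← orderOf_eq_one_iff, hk, hk0, pow_zero]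
  -- z is central in Q
  have hzQ : ∀ q ∈ (Q : Subgroup G), q * z = z * q := by
    intro q hq
    have hsc : SemiconjBy q z (q * z * q⁻¹) := by
      unfold SemiconjBy; group
    have horder : orderOf (q * z * q⁻¹) = 2 := by
      rw [← hsc.orderOf_eq q, hz2]
    have hmem : q * z * q⁻¹ ∈ (Q : Subgroup G) :=
      mul_mem (mul_mem hq hz) (inv_mem hq)
    have := huniq _ hmem horder
    calc q * z = (q * z * q⁻¹) * q := by group
    _ = z * q := by rw [this]
  -- K ⊔ Q = ⊤
  have hKQtop : K ⊔ (Q : Subgroup G) = ⊤ := by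
    have hπ : Function.Surjective (QuotientGroup.mk' K) := QuotientGroup.mk'_surjective K
    set Qb := Subgroup.map (QuotientGroup.mk' K) (Q : Subgroup G) with hQb
    have hQbtop : Qb = ⊤ := by
      rw [← Subgroup.index_eq_one]
      have h1 : Qb.index ∣ (Q : Subgroup G).index := Subgroup.index_map_dvd _ hπ
      have h2 : ¬ (2 ∣ (Q : Subgroup G).index) := Sylow.not_dvd_index Q
      have h3 : Qb.index ∣ Nat.card (G ⧸ K) := Subgroup.index_dvd_card Qb
      obtain ⟨n, hn⟩ := hquot.exists_card_eq
      rw [hn] at h3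
      obtain ⟨j, hj, hje⟩ := (Nat.dvd_prime_pow Nat.prime_two).mp h3
      rcases Nat.eq_zero_or_pos j with h0 | hpos
      · rw [hje, h0, pow_zero]
      · exfalso
        apply h2
        calc (2 : ℕ) ∣ 2 ^ j := dvd_pow_self 2 hpos.ne'
        _ ∣ (Q : Subgroup G).index := hje ▸ h1
    have : Subgroup.comap (QuotientGroup.mk' K) Qb = ⊤ := by
      rw [hQbtop, Subgroup.comap_top]
    rw [hQb, Subgroup.comap_map_eq, QuotientGroup.ker_mk'] at this
    rw [sup_comm]
    exact this
  have hdecG : ∀ g : G, ∃ k ∈ K, ∃ q ∈ (Q : Subgroup G), k * q = g := by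
    intro g
    have hmul : ((K ⊔ (Q : Subgroup G) : Subgroup G) : Set G)
        = (K : Set G) * ((Q : Subgroup G) : Set G) := Subgroup.normal_mul K _
    have : g ∈ (K : Set G) * ((Q : Subgroup G) : Set G) := by
      rw [← hmul, hKQtop]
      exact Subgroup.mem_top g
    exact Set.mem_mul.mp this
  constructor
  · -- forward: K abelian → C_K(z) = ⊥
    intro hab
    -- helper conjugation facts
    have hττ : ∀ u : G, z * (z * u * z⁻¹) * z⁻¹ = u := by
      intro u
      rw [hzi]
      calc z * (z * u * z) * z = (z * z) * u * (z * z) := by group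
        _ = u := by rw [hzz]; group
    -- the subgroup of elements of K inverted by z
    set I : Subgroup G :=
      { carrier := {x | x ∈ K ∧ z * x * z⁻¹ = x⁻¹}
        one_mem' := ⟨K.one_mem, by simp⟩
        mul_mem' := by
          rintro x y ⟨hxK, hxI⟩ ⟨hyK, hyI⟩
          refine ⟨K.mul_mem hxK hyK, ?_⟩
          calc z * (x * y) * z⁻¹ = (z * x * z⁻¹) * (z * y * z⁻¹) := by group
            _ = x⁻¹ * y⁻¹ := by rw [hxI, hyI]
            _ = y⁻¹ * x⁻¹ := hab _ _ (K.inv_mem hxK) (K.inv_mem hyK)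
            _ = (x * y)⁻¹ := by group
        inv_mem' := by
          rintro x ⟨hxK, hxI⟩
          refine ⟨K.inv_mem hxK, ?_⟩
          calc z * x⁻¹ * z⁻¹ = (z * x * z⁻¹)⁻¹ := by group
            _ = (x⁻¹)⁻¹ := by rw [hxI] } with hIdef
    have hmemI : ∀ x : G, x ∈ I ↔ x ∈ K ∧ z * x * z⁻¹ = x⁻¹ := fun x => Iff.rfl
    -- square roots inside I
    have hsqrt : ∀ x ∈ I, ∃ i ∈ I, i * i = x := by
      intro x hx
      have hodd := hoddK x ((hmemI x).mp hx).1
      have hn : orderOf x % 2 = 1 := Nat.odd_iff.mp hodd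
      refine ⟨x ^ ((orderOf x + 1) / 2), I.pow_mem hx _, ?_⟩
      calc x ^ ((orderOf x + 1) / 2) * x ^ ((orderOf x + 1) / 2)
          = x ^ ((orderOf x + 1) / 2 + (orderOf x + 1) / 2) := (pow_add x _ _).symm
        _ = x ^ (orderOf x + 1) := by congr 1; omega
        _ = x ^ orderOf x * x := by rw [pow_succ]
        _ = x := by rw [pow_orderOf_eq_one, one_mul]
    -- decomposition K = C_K(z) * I
    have hdecK : ∀ k ∈ K, ∃ c ∈ K ⊓ Subgroup.centralizer {z}, ∃ i ∈ I, c * i = k := by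
      intro k hk
      have hwK : (z * k * z⁻¹)⁻¹ * k ∈ K := K.mul_mem (K.inv_mem (hconjK k hk)) hk
      have hwI : (z * k * z⁻¹)⁻¹ * k ∈ I := by
        refine (hmemI _).mpr ⟨hwK, ?_⟩
        have e1 : ∀ A u : G, z * (A⁻¹ * u) * z⁻¹ = (z * A * z⁻¹)⁻¹ * (z * u * z⁻¹) := by
          intro A u; group
        calc z * ((z * k * z⁻¹)⁻¹ * k) * z⁻¹
            = (z * (z * k * z⁻¹) * z⁻¹)⁻¹ * (z * k * z⁻¹) := e1 _ _
          _ = k⁻¹ * (z * k * z⁻¹) := by rw [hττ]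
          _ = ((z * k * z⁻¹)⁻¹ * k)⁻¹ := by group
      obtain ⟨i, hiI, hii⟩ := hsqrt _ hwI
      have hiK : i ∈ K := ((hmemI i).mp hiI).1
      have hiz : z * i * z⁻¹ = i⁻¹ := ((hmemI i).mp hiI).2
      have h5 : z * k * z⁻¹ = k * i⁻¹ * i⁻¹ := by
        have : k * (i * i)⁻¹ = z * k * z⁻¹ := by rw [hii]; group
        rw [← this]; group
      have hconj : z * (k * i⁻¹) * z⁻¹ = k * i⁻¹ := by
        calc z * (k * i⁻¹) * z⁻¹ = (z * k * z⁻¹) * (z * i * z⁻¹)⁻¹ := by group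
          _ = (z * k * z⁻¹) * i := by rw [hiz]; group
          _ = (k * i⁻¹ * i⁻¹) * i := by rw [h5]
          _ = k * i⁻¹ := by group
      refine ⟨k * i⁻¹, ?_, i, hiI, by group⟩
      refine Subgroup.mem_inf.mpr ⟨K.mul_mem hk (K.inv_mem hiK), ?_⟩
      refine Subgroup.mem_centralizer_iff.mpr ?_
      intro h hh
      rw [Set.mem_singleton_iff] at hh
      rw [hh]
      calc z * (k * i⁻¹) = (z * (k * i⁻¹) * z⁻¹) * z := by group
        _ = (k * i⁻¹) * z := by rw [hconj]
    -- I is normalized by Q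
    have hIq : ∀ q ∈ (Q : Subgroup G), ∀ x ∈ I, q * x * q⁻¹ ∈ I := by
      intro q hq x hx
      have hqz := hzQ q hq
      have hqz' : q⁻¹ * z⁻¹ = z⁻¹ * q⁻¹ := by
        rw [← mul_inv_rev, ← mul_inv_rev, hqz]
      refine (hmemI _).mpr ⟨Subgroup.Normal.conj_mem ‹K.Normal› x ((hmemI x).mp hx).1 q, ?_⟩
      calc z * (q * x * q⁻¹) * z⁻¹ = (z * q) * x * (q⁻¹ * z⁻¹) := by group
        _ = (q * z) * x * (q⁻¹ * z⁻¹) := by rw [← hqz]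
        _ = (q * z) * x * (z⁻¹ * q⁻¹) := by rw [hqz']
        _ = q * (z * x * z⁻¹) * q⁻¹ := by group
        _ = q * x⁻¹ * q⁻¹ := by rw [((hmemI x).mp hx).2]
        _ = (q * x * q⁻¹)⁻¹ := by group
    -- I is normal in G
    have hInormal : I.Normal := by
      refine { conj_mem := ?_ }
      intro x hx g
      obtain ⟨k, hk, q, hq, rfl⟩ := hdecG g
      have h1 : q * x * q⁻¹ ∈ I := hIq q hq x hx
      have h2 : k * (q * x * q⁻¹) * k⁻¹ = q * x * q⁻¹ := by
        rw [hab k _ hk ((hmemI _).mp h1).1]; group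
      have h3 : (k * q) * x * (k * q)⁻¹ = k * (q * x * q⁻¹) * k⁻¹ := by group
      rw [h3, h2]
      exact h1
    haveI := hInormal
    -- membership in I ⊔ Q decomposes
    have hHdec : ∀ h ∈ I ⊔ (Q : Subgroup G), ∃ x ∈ I, ∃ q ∈ (Q : Subgroup G), x * q = h := by
      intro h hh
      have hmul : ((I ⊔ (Q : Subgroup G) : Subgroup G) : Set G)
          = (I : Set G) * ((Q : Subgroup G) : Set G) := Subgroup.normal_mul I _
      exact Set.mem_mul.mp (by rw [← hmul]; exact hh)
    -- I ⊔ Q is normal in G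
    have hHnormal : (I ⊔ (Q : Subgroup G)).Normal := by
      refine { conj_mem := ?_ }
      intro n hn g
      obtain ⟨k, hk, q, hq, rfl⟩ := hdecG g
      obtain ⟨c, hc, i, hiI, rfl⟩ := hdecK k hk
      rw [hcent] at hc
      have hn1 : q * n * q⁻¹ ∈ I ⊔ (Q : Subgroup G) := by
        obtain ⟨x, hx, p, hp, rfl⟩ := hHdec n hn
        have e : q * (x * p) * q⁻¹ = (q * x * q⁻¹) * (q * p * q⁻¹) := by group
        rw [e]
        exact mul_mem (Subgroup.mem_sup_left (hIq q hq x hx))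
          (Subgroup.mem_sup_right (mul_mem (mul_mem hq hp) (inv_mem hq)))
      have hn2 : i * (q * n * q⁻¹) * i⁻¹ ∈ I ⊔ (Q : Subgroup G) :=
        mul_mem (mul_mem (Subgroup.mem_sup_left hiI) hn1)
          (inv_mem (Subgroup.mem_sup_left hiI))
      have hc3 : ∀ m ∈ I ⊔ (Q : Subgroup G), c * m * c⁻¹ = m := by
        intro m hm
        obtain ⟨x, hx, p, hp, rfl⟩ := hHdec m hm
        have hcx : c * x = x * c := hab c x hc.1 ((hmemI x).mp hx).1
        have hcp : c * p = p * c := ((Subgroup.mem_centralizer_iff.mp hc.2) p hp).symm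
        calc c * (x * p) * c⁻¹ = (c * x) * (p * c⁻¹) := by group
          _ = (x * c) * (p * c⁻¹) := by rw [hcx]
          _ = x * (c * p) * c⁻¹ := by group
          _ = x * (p * c) * c⁻¹ := by rw [hcp]
          _ = x * p := by group
      have efinal : (c * i * q) * n * (c * i * q)⁻¹
          = c * (i * (q * n * q⁻¹) * i⁻¹) * c⁻¹ := by group
      rw [efinal, hc3 _ hn2]
      exact hn2
    -- I ⊔ Q has odd index, so it is all of G
    have hHodd : Odd (I ⊔ (Q : Subgroup G)).index := by
      have hdvd : (I ⊔ (Q : Subgroup G)).index ∣ (Q : Subgroup G).index :=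
        Subgroup.index_dvd_of_le le_sup_right
      have h2 : ¬ (2 ∣ (Q : Subgroup G).index) := Sylow.not_dvd_index Q
      rw [Nat.odd_iff]
      rcases Nat.mod_two_eq_zero_or_one ((I ⊔ (Q : Subgroup G)).index) with h | h
      · exact absurd ((Nat.dvd_of_mod_eq_zero h).trans hdvd) h2
      · exact h
    have hHtop := hO _ hHnormal hHodd
    -- conclude : C_K(z) = ⊥
    rw [Subgroup.eq_bot_iff_forall]
    intro c0 hc0
    have hc0K : c0 ∈ K := hc0.1
    have hc0z : z * c0 * z⁻¹ = c0 := by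
      have := (Subgroup.mem_centralizer_iff.mp hc0.2) z (Set.mem_singleton z)
      calc z * c0 * z⁻¹ = (z * c0) * z⁻¹ := by group
        _ = (c0 * z) * z⁻¹ := by rw [this]
        _ = c0 := by group
    have hc0H : c0 ∈ I ⊔ (Q : Subgroup G) := by rw [hHtop]; exact Subgroup.mem_top c0
    obtain ⟨x, hx, p, hp, rfl⟩ := hHdec c0 hc0H
    have hpK : p ∈ K := by
      have e : p = x⁻¹ * (x * p) := by group
      rw [e]
      exact K.mul_mem (K.inv_mem ((hmemI x).mp hx).1) hc0K
    have hp1 : p = 1 := hQK p hp hpK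
    rw [hp1, mul_one] at hc0z ⊢
    have hxx : x = x⁻¹ := by rw [← ((hmemI x).mp hx).2, hc0z]
    have h2 : x * x = 1 := by
      calc x * x = x⁻¹ * x := by rw [← hxx]
        _ = 1 := by group
    have hordx : orderOf x ∣ 2 := orderOf_dvd_of_pow_eq_one (by rw [pow_two]; exact h2)
    have hodd := hoddK x ((hmemI x).mp hx).1
    rcases (Nat.dvd_prime Nat.prime_two).mp hordx with h | h
    · exact orderOf_eq_one_iff.mp h
    · rw [h, Nat.odd_iff] at hodd
      omega
  · -- backward
    intro hC a b ha hb
    -- the map k ↦ k⁻¹ * z k z⁻¹ on K is injective hence surjective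
    set f : K → K := fun k => ⟨(k : G)⁻¹ * (z * k * z⁻¹), mul_mem (K.inv_mem k.2) (hconjK k k.2)⟩ with hf
    have hinj : Function.Injective f := by
      intro x y hxy
      have h1 : (x : G)⁻¹ * (z * x * z⁻¹) = (y : G)⁻¹ * (z * y * z⁻¹) := by
        have := congrArg (Subtype.val) hxy
        simpa [hf] using this
      have hw : (y : G) * (x : G)⁻¹ ∈ K ⊓ Subgroup.centralizer {z} := by
        refine Subgroup.mem_inf.mpr ⟨K.mul_mem y.2 (K.inv_mem x.2), Subgroup.mem_centralizer_iff.mpr ?_⟩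
        intro h hh
        rw [Set.mem_singleton_iff] at hh
        rw [hh]
        -- z * (y * x⁻¹) = (y * x⁻¹) * z
        have : z * ((y : G) * (x : G)⁻¹) * z⁻¹ = (y : G) * (x : G)⁻¹ := by
          have e : z * (y:G) * z⁻¹ * (z * (x:G) * z⁻¹)⁻¹ = (y:G) * (x:G)⁻¹ := by
            have := h1
            -- rearrange: y * x⁻¹ = (z y z⁻¹) * (z x z⁻¹)⁻¹
            have e2 : (z * (y:G) * z⁻¹) = (y:G) * ((x:G)⁻¹ * (z * (x:G) * z⁻¹)) := by
              rw [h1]; group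
            rw [e2]; group
          calc z * ((y : G) * (x : G)⁻¹) * z⁻¹
              = z * (y:G) * z⁻¹ * (z * (x:G) * z⁻¹)⁻¹ := by group
            _ = (y : G) * (x : G)⁻¹ := e
        calc z * ((y : G) * (x : G)⁻¹)
            = (z * ((y : G) * (x : G)⁻¹) * z⁻¹) * z := by group
          _ = ((y : G) * (x : G)⁻¹) * z := by rw [this]
      rw [hC] at hw
      have : (y : G) * (x : G)⁻¹ = 1 := hw
      have : (y : G) = (x : G) := by
        rw [mul_inv_eq_one] at this; exact this
      exact Subtype.ext this.symm
    have hsurj : Function.Surjective f := Finite.surjective_of_injective hinj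
    have hinv : ∀ k ∈ K, z * k * z⁻¹ = k⁻¹ := by
      intro k hk
      obtain ⟨a, hae⟩ := hsurj ⟨k, hk⟩
      have hae' : (a : G)⁻¹ * (z * a * z⁻¹) = k := congrArg Subtype.val hae
      rw [← hae']
      have hzz' : z * (z * (a:G) * z⁻¹) * z⁻¹ = (a : G) := by
        rw [hzi]; calc z * (z * (a:G) * z) * z = (z*z) * (a:G) * (z*z) := by group
        _ = (a:G) := by rw [hzz]; group
      calc z * ((a : G)⁻¹ * (z * a * z⁻¹)) * z⁻¹
          = (z * (a:G) * z⁻¹)⁻¹ * (z * (z * (a:G) * z⁻¹) * z⁻¹) := by group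
        _ = (z * (a:G) * z⁻¹)⁻¹ * (a : G) := by rw [hzz']
        _ = ((a : G)⁻¹ * (z * a * z⁻¹))⁻¹ := by group
    have hia := hinv a ha
    have hib := hinv b hb
    have hiab := hinv (a * b) (mul_mem ha hb)
    have : (a * b)⁻¹ = a⁻¹ * b⁻¹ := by
      rw [← hiab]
      calc z * (a * b) * z⁻¹ = (z * a * z⁻¹) * (z * b * z⁻¹) := by group
        _ = a⁻¹ * b⁻¹ := by rw [hia, hib]
    have : b⁻¹ * a⁻¹ = a⁻¹ * b⁻¹ := by rw [← mul_inv_rev, this]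
    calc a * b = (b⁻¹ * a⁻¹)⁻¹ := by group
      _ = (a⁻¹ * b⁻¹)⁻¹ := by rw [this]
      _ = b * a := by group
end

section
/- Let G = K ⋊ Q be a finite group with Q ∈ Syl₂(G) having a unique involution z, K the normal 2-complement, O^{2'}(G) = G, C_K(z) = C_K(Q), and suppose every real element of G has prime power order. If K is nilpotent, then K is a p-group for some odd prime p. -/
open Subgroup Pointwise commutatorElement


lemma aux_orderOf_conj {G : Type*} [Group G] (g n : G) : orderOf (g * n * g⁻¹) = orderOf n := by
  have := orderOf_injective (MulAut.conj g).toMonoidHom (MulAut.conj g).injective n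
  simpa [MulAut.conj_apply] using this

lemma aux_sylow_facts {G : Type*} [Group G] [Finite G] (K : Subgroup G) [K.Normal]
    (hnil : Group.IsNilpotent ↥K) {q : ℕ} (hq : q.Prime) :
    ∃ Sq : Subgroup G, Sq ≤ K ∧ Sq.Normal ∧ (∀ g ∈ Sq, ∃ i, orderOf g ∣ q ^ i) ∧
      (∀ g ∈ K, ∀ i, orderOf g ∣ q ^ i → g ∈ Sq) ∧ IsPGroup q Sq := by
  haveI : Fact q.Prime := ⟨hq⟩
  haveI := hnil
  obtain ⟨S⟩ : Nonempty (Sylow q ↥K) := Sylow.nonempty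
  have hSnorm : (S : Subgroup ↥K).Normal :=
    Sylow.normal_of_normalizerCondition (normalizerCondition_of_isNilpotent) S
  haveI : Unique (Sylow q ↥K) := Sylow.unique_of_normal S hSnorm
  have hord : ∀ g ∈ (S : Subgroup ↥K).map K.subtype, ∃ i, orderOf g ∣ q ^ i := by
    rintro g ⟨⟨g', hg'⟩, hmem, rfl⟩
    obtain ⟨i, hi⟩ := S.isPGroup' ⟨⟨g', hg'⟩, hmem⟩
    refine ⟨i, orderOf_dvd_of_pow_eq_one ?_⟩
    have := congrArg (fun x : ↥S => ((x : ↥K) : G)) hi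
    simpa using this
  have hmemc : ∀ g ∈ K, ∀ i : ℕ, orderOf g ∣ q ^ i → g ∈ (S : Subgroup ↥K).map K.subtype := by
    intro g hg i hgi
    have horder : orderOf (⟨g, hg⟩ : ↥K) = orderOf g := by
      have := orderOf_injective K.subtype Subtype.coe_injective ⟨g, hg⟩
      simpa using this
    obtain ⟨j, _, hje⟩ := (Nat.dvd_prime_pow hq).mp hgi
    have hP : IsPGroup q (Subgroup.zpowers (⟨g, hg⟩ : ↥K)) :=
      IsPGroup.of_card (by rw [Nat.card_zpowers, horder, hje])
    obtain ⟨T, hT⟩ := hP.exists_le_sylow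
    have hTS : T = S := Subsingleton.elim T S
    subst hTS
    exact ⟨⟨g, hg⟩, hT (Subgroup.mem_zpowers _), rfl⟩
  refine ⟨(S : Subgroup ↥K).map K.subtype, Subgroup.map_subtype_le _, ?_, hord, hmemc, S.isPGroup'.map _⟩
  constructor
  intro n hn g
  obtain ⟨i, hi⟩ := hord n hn
  refine hmemc _ (Subgroup.Normal.conj_mem ‹K.Normal› n (Subgroup.map_subtype_le _ hn) g) i ?_
  rw [aux_orderOf_conj]
  exact hi

lemma aux_commute {G : Type*} [Group G] {p q : ℕ} (hpq : Nat.Coprime p q)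
    (A B : Subgroup G) (hA : A.Normal) (hB : B.Normal)
    (hAp : ∀ g ∈ A, ∃ i, orderOf g ∣ p ^ i) (hBq : ∀ g ∈ B, ∃ i, orderOf g ∣ q ^ i)
    {x y : G} (hx : x ∈ A) (hy : y ∈ B) : Commute x y := by
  rw [← commutatorElement_eq_one_iff_commute]
  have h1 : ⁅x, y⁆ ∈ B := by
    have : (x * y * x⁻¹) * y⁻¹ ∈ B := B.mul_mem (hB.conj_mem y hy x) (B.inv_mem hy)
    simpa [commutatorElement_def, mul_assoc] using this
  have h2 : ⁅x, y⁆ ∈ A := by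
    have : x * (y * x⁻¹ * y⁻¹) ∈ A := A.mul_mem hx (hA.conj_mem x⁻¹ (A.inv_mem hx) y)
    simpa [commutatorElement_def, mul_assoc] using this
  obtain ⟨i, hi⟩ := hAp _ h2
  obtain ⟨j, hj⟩ := hBq _ h1
  have hcop : Nat.Coprime (p ^ i) (q ^ j) := hpq.pow i j
  have : orderOf ⁅x, y⁆ ∣ 1 := by
    rw [← hcop]
    exact Nat.dvd_gcd hi hj
  rw [Nat.dvd_one] at this
  exact orderOf_eq_one_iff.mp this

theorem stmt_11 {G : Type*} [Group G] [Finite G] (K : Subgroup G) [K.Normal]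
    (Q : Sylow 2 G) (z : G) (hz : z ∈ Q) (hz2 : orderOf z = 2)
    (huniq : ∀ w ∈ Q, orderOf w = 2 → w = z)
    (hKodd : Odd (Nat.card K)) (hquot : IsPGroup 2 (G ⧸ K))
    (hO : ∀ N : Subgroup G, N.Normal → Odd N.index → N = ⊤)
    (hcent : K ⊓ Subgroup.centralizer {z} = K ⊓ Subgroup.centralizer (Q : Set G))
    (hP : ∀ x : G, IsReal x → x = 1 ∨ IsPrimePow (orderOf x))
    (hnilp : Group.IsNilpotent K) (hKne : K ≠ ⊥) :
    ∃ p : ℕ, p.Prime ∧ Odd p ∧ IsPGroup p K := by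
  classical
  haveI : Fact (Nat.Prime 2) := ⟨Nat.prime_two⟩
  have hKnormal : K.Normal := inferInstance
  -- basic facts about z
  have hzz : z * z = 1 := by
    have := pow_orderOf_eq_one z
    rwa [hz2, pow_two] at this
  have hzinv : z⁻¹ = z := inv_eq_of_mul_eq_one_right hzz
  have hsig : ∀ k : G, z * (z * k * z⁻¹) * z⁻¹ = k := by
    intro k
    rw [hzinv]
    calc z * (z * k * z) * z = (z * z) * k * (z * z) := by group
    _ = k := by rw [hzz, one_mul, mul_one]
  have hA : ∀ k : G, z * (k⁻¹ * (z * k * z⁻¹)) * z⁻¹ = (k⁻¹ * (z * k * z⁻¹))⁻¹ := by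
    intro k
    have h1 : z * (k⁻¹ * (z * k * z⁻¹)) * z⁻¹
        = (z * k⁻¹ * z⁻¹) * (z * (z * k * z⁻¹) * z⁻¹) := by group
    rw [h1, hsig k]
    group
  have hreal : ∀ x : G, z * x * z⁻¹ = x⁻¹ → IsReal x := by
    intro x hx
    exact ⟨z, by rw [hzinv]; rw [hzinv] at hx; exact hx⟩
  -- index facts
  obtain ⟨n₀, hn₀⟩ := IsPGroup.iff_card.mp hquot
  have hKindex : K.index = 2 ^ n₀ := by
    rw [Subgroup.index, hn₀]
  have hQodd2 : ¬ 2 ∣ (Q : Subgroup G).index := Q.not_dvd_index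
  have hQoddidx : Odd (Q : Subgroup G).index := by
    rcases Nat.even_or_odd (Q : Subgroup G).index with h | h
    · exact absurd h.two_dvd hQodd2
    · exact h
  have hsupKQ : K ⊔ (Q : Subgroup G) = ⊤ := by
    have h1 : (K ⊔ (Q : Subgroup G)).index ∣ K.index := Subgroup.index_dvd_of_le le_sup_left
    have h2 : (K ⊔ (Q : Subgroup G)).index ∣ (Q : Subgroup G).index :=
      Subgroup.index_dvd_of_le le_sup_right
    rw [hKindex] at h1
    obtain ⟨j, hj, hje⟩ := (Nat.dvd_prime_pow Nat.prime_two).mp h1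
    rw [← Subgroup.index_eq_one, hje]
    rcases Nat.eq_zero_or_pos j with rfl | hjpos
    · rfl
    · exfalso
      apply hQodd2
      exact dvd_trans (dvd_trans (dvd_pow_self 2 hjpos.ne') (hje ▸ dvd_refl _)) h2
  -- membership conversions through hcent
  have hcentz_to_Q : ∀ k ∈ K, z * k * z⁻¹ = k → k ∈ Subgroup.centralizer (Q : Set G) := by
    intro k hk hzk
    have hzk' : z * k = k * z := by
      calc z * k = z * k * z⁻¹ * z := by group
      _ = k * z := by rw [hzk]
    have hmem : k ∈ K ⊓ Subgroup.centralizer {z} := by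
      refine ⟨hk, Subgroup.mem_centralizer_iff.mpr ?_⟩
      rintro g rfl
      exact hzk'
    rw [hcent] at hmem
    exact hmem.2
  by_cases hcase : ∀ k ∈ K, z * k * z⁻¹ = k⁻¹ → k = 1
  · -- case 1: z centralizes K, contradiction
    exfalso
    have hKcent : ∀ k ∈ K, k ∈ Subgroup.centralizer (Q : Set G) := by
      intro k hk
      have hXK : k⁻¹ * (z * k * z⁻¹) ∈ K :=
        K.mul_mem (K.inv_mem hk) (hKnormal.conj_mem k hk z)
      have hX1 := hcase _ hXK (hA k)
      have h2 : z * k * z⁻¹ = k := (inv_mul_eq_one.mp hX1).symm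
      exact hcentz_to_Q k hk h2
    have hQnormal : (Q : Subgroup G).Normal := by
      rw [← Subgroup.normalizer_eq_top_iff, ← top_le_iff, ← hsupKQ, sup_le_iff]
      constructor
      · intro k hk
        have hc := hKcent k hk
        rw [Subgroup.mem_normalizer_iff]
        intro n
        constructor
        · intro hn
          have : n * k = k * n := Subgroup.mem_centralizer_iff.mp hc n hn
          have : k * n * k⁻¹ = n := by rw [← this]; group
          rwa [this]
        · intro hn
          have h3 : (k * n * k⁻¹) * k = k * (k * n * k⁻¹) :=
            Subgroup.mem_centralizer_iff.mp hc _ hn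
          have h4 : k * n = k * (k * n * k⁻¹) := by
            calc k * n = (k * n * k⁻¹) * k := by group
            _ = k * (k * n * k⁻¹) := h3
          have h5 : n = k * n * k⁻¹ := mul_left_cancel h4
          rw [h5]; exact hn
      · exact Subgroup.le_normalizer
    have hQtop : (Q : Subgroup G) = ⊤ := hO _ hQnormal hQoddidx
    have hG2 : IsPGroup 2 G := by
      intro g
      obtain ⟨i, hi⟩ := Q.isPGroup' ⟨g, by rw [hQtop]; trivial⟩
      exact ⟨i, by simpa using congrArg (fun x : ↥(Q : Subgroup G) => (x : G)) hi⟩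
    obtain ⟨m, hm⟩ := IsPGroup.iff_card.mp hG2
    have hdvd : Nat.card K ∣ 2 ^ m := hm ▸ Subgroup.card_subgroup_dvd_card K
    obtain ⟨j, hj, hje⟩ := (Nat.dvd_prime_pow Nat.prime_two).mp hdvd
    have hj0 : j = 0 := by
      by_contra hj0
      have : 2 ∣ Nat.card K := hje ▸ dvd_pow_self 2 hj0
      rw [Nat.odd_iff] at hKodd
      omega
    subst hj0
    exact hKne (Subgroup.card_eq_one.mp (by rw [hje]; norm_num))
  · push_neg at hcase
    obtain ⟨a, haK, haInv, hane⟩ := hcase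
    -- a is a nontrivial real element of K, its order is a prime power p ^ m
    obtain ⟨p, m, hpP, hm, hpm⟩ := (hP a (hreal a haInv)).resolve_left hane
    have hpprime : p.Prime := hpP.nat_prime
    haveI : Fact p.Prime := ⟨hpprime⟩
    -- p is odd
    have haKorder : orderOf a ∣ Nat.card K := by
      have h1 : orderOf (⟨a, haK⟩ : ↥K) = orderOf a := by
        have := orderOf_injective K.subtype Subtype.coe_injective ⟨a, haK⟩
        simpa using this
      rw [← h1]
      exact orderOf_dvd_natCard _
    have hpodd : Odd p := by
      refine hpprime.odd_of_ne_two ?_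
      rintro rfl
      have : 2 ∣ Nat.card K := dvd_trans (dvd_trans (dvd_pow_self 2 hm.ne') (hpm ▸ dvd_refl _)) haKorder
      rw [Nat.odd_iff] at hKodd
      omega
    -- the normal Sylow p-subgroup of K, viewed in G
    obtain ⟨Kp, hKpK, hKpN, hKpOrd, hKpMem, hKpGroup⟩ := aux_sylow_facts K hnilp hpprime
    have haKp : a ∈ Kp := hKpMem a haK m (by rw [← hpm])
    -- every q-element of K for q ≠ p is centralized by z
    have hcentD : ∀ q : ℕ, q.Prime → q ≠ p → ∀ k ∈ K, (∀ j, orderOf k ∣ q ^ j → z * k * z⁻¹ = k) := by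
      intro q hq hqp k hk j hkj
      obtain ⟨Kq, hKqK, hKqN, hKqOrd, hKqMem, _⟩ := aux_sylow_facts K hnilp hq
      have hkKq : k ∈ Kq := hKqMem k hk j hkj
      have hwK : z * k * z⁻¹ ∈ K := hKnormal.conj_mem k hk z
      have hwKq : z * k * z⁻¹ ∈ Kq := hKqMem _ hwK j (by rw [aux_orderOf_conj]; exact hkj)
      set φ := k⁻¹ * (z * k * z⁻¹) with hφdef
      have hφKq : φ ∈ Kq := Kq.mul_mem (Kq.inv_mem hkKq) hwKq
      by_contra hne
      have hφne : φ ≠ 1 := by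
        intro h
        exact hne (inv_mul_eq_one.mp h).symm
      obtain ⟨r, s, hrP, hs, hrs⟩ := (hP φ (hreal φ (hA k))).resolve_left hφne
      have hrprime := hrP.nat_prime
      obtain ⟨jφ, hjφ⟩ := hKqOrd φ hφKq
      have hrq : r = q := by
        have h1 : r ∣ q ^ jφ :=
          dvd_trans (dvd_trans (dvd_pow_self r hs.ne') (hrs ▸ dvd_refl _)) hjφ
        exact (Nat.prime_dvd_prime_iff_eq hrprime hq).mp (hrprime.dvd_of_dvd_pow h1)
      have horda : orderOf a = p ^ m := hpm.symm
      have hordφ : orderOf φ = q ^ s := by rw [← hrs, hrq]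
      have hcomm : Commute a φ :=
        aux_commute ((Nat.coprime_primes hpprime hq).mpr (Ne.symm hqp)) Kp Kq hKpN hKqN
          hKpOrd hKqOrd haKp hφKq
      have hφinv : z * φ * z⁻¹ = φ⁻¹ := hA k
      have hinvprod : z * (a * φ) * z⁻¹ = (a * φ)⁻¹ := by
        have h1 : z * (a * φ) * z⁻¹ = (z * a * z⁻¹) * (z * φ * z⁻¹) := by group
        rw [h1, haInv, hφinv]
        exact hcomm.inv_inv.eq.trans (mul_inv_rev a φ).symm
      have hordprod : orderOf (a * φ) = p ^ m * q ^ s := by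
        rw [hcomm.orderOf_mul_eq_mul_orderOf_of_coprime
          (by rw [horda, hordφ]; exact ((Nat.coprime_primes hpprime hq).mpr (Ne.symm hqp)).pow m s),
          horda, hordφ]
      have hprodne : a * φ ≠ 1 := by
        intro h
        have h1 : orderOf (a * φ) = 1 := by rw [h, orderOf_one]
        rw [hordprod] at h1
        nlinarith [Nat.one_lt_pow hm.ne' hpprime.one_lt, pow_pos hq.pos s]
      rcases hP (a * φ) (hreal _ hinvprod) with h | h
      · exact hprodne h
      · obtain ⟨r', t, hr'P, ht, hr't⟩ := h
        have hr'prime := hr'P.nat_prime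
        rw [hordprod] at hr't
        have hp_dvd : p ∣ r' ^ t := by
          rw [hr't]
          exact dvd_mul_of_dvd_left (dvd_pow_self p hm.ne') _
        have hq_dvd : q ∣ r' ^ t := by
          rw [hr't]
          exact dvd_mul_of_dvd_right (dvd_pow_self q hs.ne') _
        have hpr' : p = r' :=
          (Nat.prime_dvd_prime_iff_eq hpprime hr'prime).mp (hpprime.dvd_of_dvd_pow hp_dvd)
        have hqr' : q = r' :=
          (Nat.prime_dvd_prime_iff_eq hq hr'prime).mp (hq.dvd_of_dvd_pow hq_dvd)
        exact hqp (hqr'.trans hpr'.symm)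
    -- decomposition: every element of K is a product of an element of Kp and
    -- an element of K centralizing Q
    have hdecomp : ∀ n : ℕ, ∀ k ∈ K, orderOf k = n →
        ∃ x c : G, x ∈ Kp ∧ c ∈ K ∧ c ∈ Subgroup.centralizer (Q : Set G) ∧ k = x * c := by
      intro n
      induction n using Nat.strong_induction_on with
      | _ n ih =>
        intro k hk hord
        rcases eq_or_ne n 1 with rfl | hn1
        · exact ⟨1, 1, Kp.one_mem, K.one_mem, (Subgroup.centralizer _).one_mem, by
            rw [orderOf_eq_one_iff.mp hord]; simp⟩
        have hn0 : n ≠ 0 := by rw [← hord]; exact (orderOf_pos k).ne'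
        set q := n.minFac with hqdef
        have hq : q.Prime := Nat.minFac_prime hn1
        have hqn : q ∣ n := Nat.minFac_dvd n
        set α := n.factorization q with hα
        have hα1 : 0 < α := hq.factorization_pos_of_dvd hn0 hqn
        set mrem := n / q ^ α with hmrem
        have hnm : q ^ α * mrem = n := Nat.ordProj_mul_ordCompl_eq_self n q
        have hcopqm : Nat.Coprime q mrem := Nat.coprime_ordCompl hq hn0
        have hcop : Nat.Coprime (q ^ α) mrem := hcopqm.pow_left α
        obtain ⟨u, v, huv⟩ := Nat.isCoprime_iff_coprime.mpr hcop
        set y := k ^ (v * (mrem : ℤ)) with hy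
        set c' := k ^ (u * ((q : ℤ) ^ α)) with hc'
        have hk_split : k = y * c' := by
          rw [hy, hc', ← zpow_add]
          have h1 : v * (mrem : ℤ) + u * ((q : ℤ) ^ α) = 1 := by
            push_cast at huv ⊢
            linarith
          rw [h1, zpow_one]
        have hyK : y ∈ K := K.zpow_mem hk _
        have hc'K : c' ∈ K := K.zpow_mem hk _
        have hkn : k ^ (n : ℤ) = 1 := by
          rw [zpow_natCast, ← hord, pow_orderOf_eq_one]
        have hyord : orderOf y ∣ q ^ α := by
          apply orderOf_dvd_of_pow_eq_one
          rw [hy, ← zpow_natCast, ← zpow_mul]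
          have h2 : v * (mrem : ℤ) * ((q ^ α : ℕ) : ℤ) = (n : ℤ) * v := by
            push_cast [← hnm]
            ring
          rw [h2, zpow_mul, hkn, one_zpow]
        have hc'ord : orderOf c' ∣ mrem := by
          apply orderOf_dvd_of_pow_eq_one
          rw [hc', ← zpow_natCast, ← zpow_mul]
          have h2 : u * ((q : ℤ) ^ α) * ((mrem : ℕ) : ℤ) = (n : ℤ) * u := by
            push_cast [← hnm]
            ring
          rw [h2, zpow_mul, hkn, one_zpow]
        have hmpos : 0 < mrem := by
          rcases Nat.eq_zero_or_pos mrem with h | h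
          · rw [h, mul_zero] at hnm; exact absurd hnm.symm hn0
          · exact h
        have hmlt : mrem < n := by
          rw [hmrem]
          exact Nat.div_lt_self (Nat.pos_of_ne_zero hn0) (Nat.one_lt_pow hα1.ne' hq.one_lt)
        obtain ⟨x, c, hx, hcK, hcC, hce⟩ :=
          ih (orderOf c') (lt_of_le_of_lt (Nat.le_of_dvd hmpos hc'ord) hmlt) c' hc'K rfl
        rcases eq_or_ne q p with rfl | hqp
        · have hyKp : y ∈ Kp := hKpMem y hyK α hyord
          exact ⟨y * x, c, Kp.mul_mem hyKp hx, hcK, hcC, by rw [hk_split, hce, mul_assoc]⟩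
        · have hyz : z * y * z⁻¹ = y := hcentD q hq hqp y hyK α hyord
          have hyQ : y ∈ Subgroup.centralizer (Q : Set G) := hcentz_to_Q y hyK hyz
          obtain ⟨Kq, hKqK, hKqN, hKqOrd, hKqMem, _⟩ := aux_sylow_facts K hnilp hq
          have hyKq : y ∈ Kq := hKqMem y hyK α hyord
          have hcomm : Commute x y :=
            aux_commute ((Nat.coprime_primes hpprime hq).mpr (fun h => hqp h.symm)) Kp Kq
              hKpN hKqN hKpOrd hKqOrd hx hyKq
          refine ⟨x, y * c, hx, K.mul_mem hyK hcK, (Subgroup.centralizer _).mul_mem hyQ hcC, ?_⟩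
          rw [hk_split, hce, ← mul_assoc, ← hcomm.eq, mul_assoc]
    -- the subgroup N = Kp ⊔ Q is normal with odd index, hence equals G
    set N := Kp ⊔ (Q : Subgroup G) with hNdef
    have hKpleN : Kp ≤ N := le_sup_left
    have hQleN : (Q : Subgroup G) ≤ N := le_sup_right
    have hgen : ∀ g : G, (g ∈ K ∨ g ∈ (Q : Subgroup G)) → ∀ n ∈ N, g * n * g⁻¹ ∈ N := by
      intro g hg n hn
      rw [hNdef, Subgroup.sup_eq_closure] at hn
      induction hn using Subgroup.closure_induction with
      | mem w hw =>
        rcases hw with hw | hw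
        · exact hKpleN (hKpN.conj_mem w hw g)
        · rcases hg with hgK | hgQ
          · obtain ⟨x, c, hx, hcK, hcC, hge⟩ := hdecomp (orderOf g) g hgK rfl
            have hcw : c * w * c⁻¹ = w := by
              have h1 : w * c = c * w := Subgroup.mem_centralizer_iff.mp hcC w hw
              rw [← h1]; group
            have hxw : g * w * g⁻¹ = (x * (w * x⁻¹ * w⁻¹)) * w := by
              rw [hge, mul_inv_rev]
              calc x * c * w * (c⁻¹ * x⁻¹) = x * (c * w * c⁻¹) * x⁻¹ := by group
              _ = x * w * x⁻¹ := by rw [hcw]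
              _ = (x * (w * x⁻¹ * w⁻¹)) * w := by group
            rw [hxw]
            exact N.mul_mem (hKpleN
              (Kp.mul_mem hx (hKpN.conj_mem x⁻¹ (Kp.inv_mem hx) w)))
              (hQleN hw)
          · exact hQleN ((Q : Subgroup G).mul_mem
              ((Q : Subgroup G).mul_mem hgQ hw) ((Q : Subgroup G).inv_mem hgQ))
      | one => simpa using N.one_mem
      | mul x y hx hy ihx ihy =>
        have h1 : g * (x * y) * g⁻¹ = (g * x * g⁻¹) * (g * y * g⁻¹) := by group
        rw [h1]; exact N.mul_mem ihx ihy
      | inv x hx ihx =>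
        have h1 : g * x⁻¹ * g⁻¹ = (g * x * g⁻¹)⁻¹ := by group
        rw [h1]; exact N.inv_mem ihx
    have hNnormal : N.Normal := by
      constructor
      intro n hn g
      have hgtop : g ∈ K ⊔ (Q : Subgroup G) := by rw [hsupKQ]; trivial
      rw [Subgroup.sup_eq_closure] at hgtop
      have main : (∀ n ∈ N, g * n * g⁻¹ ∈ N) ∧ (∀ n ∈ N, g⁻¹ * n * g ∈ N) := by
        induction hgtop using Subgroup.closure_induction with
        | mem w hw =>
          have hw' : w ∈ K ∨ w ∈ (Q : Subgroup G) := by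
            rcases hw with hw | hw
            · exact Or.inl hw
            · exact Or.inr hw
          have hwinv : w⁻¹ ∈ K ∨ w⁻¹ ∈ (Q : Subgroup G) := by
            rcases hw' with hw' | hw'
            · exact Or.inl (K.inv_mem hw')
            · exact Or.inr ((Q : Subgroup G).inv_mem hw')
          constructor
          · exact hgen w hw'
          · intro n hn
            simpa using hgen w⁻¹ hwinv n hn
        | one =>
          constructor <;> intro n hn <;> simpa using hn
        | mul x y hx hy ihx ihy =>
          constructor
          · intro n hn
            have h1 : (x * y) * n * (x * y)⁻¹ = x * (y * n * y⁻¹) * x⁻¹ := by group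
            rw [h1]; exact ihx.1 _ (ihy.1 _ hn)
          · intro n hn
            have h1 : (x * y)⁻¹ * n * (x * y) = y⁻¹ * (x⁻¹ * n * x) * y := by group
            rw [h1]; exact ihy.2 _ (ihx.2 _ hn)
        | inv x hx ihx =>
          constructor
          · intro n hn
            have h1 : x⁻¹ * n * (x⁻¹)⁻¹ = x⁻¹ * n * x := by group
            rw [h1]; exact ihx.2 _ hn
          · intro n hn
            have h1 : (x⁻¹)⁻¹ * n * x⁻¹ = x * n * x⁻¹ := by group
            rw [h1]; exact ihx.1 _ hn
      exact main.1 n hn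
    have hNodd : Odd N.index := by
      have hdvd : N.index ∣ (Q : Subgroup G).index := Subgroup.index_dvd_of_le le_sup_right
      rcases Nat.even_or_odd N.index with h | h
      · exact absurd (dvd_trans h.two_dvd hdvd) hQodd2
      · exact h
    have hNtop : N = ⊤ := hO N hNnormal hNodd
    -- cardinality comparison
    have hGcard : Nat.card K * 2 ^ n₀ = Nat.card G := by
      rw [← hKindex]; exact Subgroup.card_mul_index K
    have hcardQ : Nat.card (Q : Subgroup G) = 2 ^ n₀ := by
      rw [Sylow.card_eq_multiplicity]
      congr 1
      rw [← hGcard, Nat.factorization_mul (by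
          have := hKodd; rcases this with ⟨t, ht⟩; omega) (pow_ne_zero n₀ two_ne_zero)]
      have h1 : (Nat.card K).factorization 2 = 0 := by
        apply Nat.factorization_eq_zero_of_not_dvd
        rw [Nat.odd_iff] at hKodd
        omega
      rw [Finsupp.add_apply, h1, Nat.Prime.factorization_pow Nat.prime_two,
        Finsupp.single_eq_same, zero_add]
    haveI : Kp.Normal := hKpN
    have hsetN : ((N : Subgroup G) : Set G) = (Kp : Set G) * ((Q : Subgroup G) : Set G) :=
      Subgroup.normal_mul Kp (Q : Subgroup G)
    have hle : Nat.card G ≤ Nat.card Kp * 2 ^ n₀ := by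
      calc Nat.card G = Nat.card (⊤ : Subgroup G) := (Subgroup.card_top).symm
      _ = Nat.card N := by rw [hNtop]
      _ = Nat.card ((Kp : Set G) * ((Q : Subgroup G) : Set G)) := by
          rw [← hsetN]; rfl
      _ ≤ Nat.card (Kp : Set G) * Nat.card ((Q : Subgroup G) : Set G) := Set.natCard_mul_le
      _ = Nat.card Kp * 2 ^ n₀ := by rw [← hcardQ]; rfl
    have hKple : Nat.card K ≤ Nat.card Kp := by
      have h2 : Nat.card K * 2 ^ n₀ ≤ Nat.card Kp * 2 ^ n₀ := by rw [hGcard]; exact hle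
      exact Nat.le_of_mul_le_mul_right h2 (pow_pos (by norm_num) n₀)
    have hKpeq : Kp = K := Subgroup.eq_of_le_of_card_ge hKpK hKple
    refine ⟨p, hpprime, hpodd, ?_⟩
    rw [← hKpeq]
    exact hKpGroup
end

section
/- Let G = N ⋊ H be a finite group where N is a normal 2-subgroup, H = K ⋊ ⟨z⟩ with z an involution inverting every element of the odd-order group K (so H is 'dihedral-like'), and suppose K acts fixed-point freely on N and every real element of G has prime power order. Then for every 1 ≠ k ∈ K, C_N(k) = 1; i.e., if some 1 ≠ k ∈ K had C_N(k) > 1, then G would contain a real element of order 2·o(k') for a prime-order power k' of k, contradicting the hypothesis. Formally: if every real element of G has prime power order and z inverts every element of K, then C_N(k) = 1 for all 1 ≠ k ∈ K. -/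
theorem stmt_18 {G : Type*} [Group G] [Finite G] (N K : Subgroup G) [N.Normal]
    (hN2 : IsPGroup 2 N) (hKodd : Odd (Nat.card K)) (z : G)
    (hz2 : z * z = 1)
    (hinv : ∀ k ∈ K, z⁻¹ * k * z = k⁻¹)
    (hzN : z ∈ Subgroup.normalizer (N : Set G)) (hzK : z ∈ Subgroup.normalizer (K : Set G))
    (hKN : K ≤ Subgroup.normalizer (N : Set G))
    (hgen : N ⊔ (K ⊔ Subgroup.zpowers z) = ⊤)
    (hint : N ⊓ (K ⊔ Subgroup.zpowers z) = ⊥)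
    (hP : ∀ x : G, IsReal x → x = 1 ∨ IsPrimePow (orderOf x)) :
    ∀ k ∈ K, k ≠ 1 → N ⊓ Subgroup.centralizer {k} = ⊥ := by
  haveI : Fact (Nat.Prime 2) := ⟨Nat.prime_two⟩
  intro k hk hk1
  by_contra hne
  obtain ⟨n, hnmem, hn1⟩ :=
    ((N ⊓ Subgroup.centralizer {k}).bot_or_exists_ne_one).resolve_left hne
  rw [Subgroup.mem_inf] at hnmem
  obtain ⟨hnN, hnCk⟩ := hnmem
  have hzinv : z⁻¹ = z := by
    rw [inv_eq_iff_mul_eq_one]; exact hz2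
  -- order of k is odd and > 1
  have hk0 : orderOf k ≠ 0 := (orderOf_pos k).ne'
  have hkdvd : orderOf k ∣ Nat.card K := Subgroup.orderOf_dvd_natCard K hk
  have hoddk : Odd (orderOf k) := by
    rcases Nat.even_or_odd (orderOf k) with he | ho
    · exfalso
      have : Even (Nat.card K) := (even_iff_two_dvd.mpr
        (dvd_trans (even_iff_two_dvd.mp he) hkdvd))
      exact (Nat.not_even_iff_odd.mpr hKodd) this
    · exact ho
  have hkord1 : orderOf k ≠ 1 := by
    simpa [orderOf_eq_one_iff] using hk1
  obtain ⟨p, hp, hpd⟩ := Nat.exists_prime_and_dvd hkord1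
  have hp2 : p ≠ 2 := by
    rintro rfl
    exact (Nat.not_even_iff_odd.mpr hoddk) (even_iff_two_dvd.mpr hpd)
  -- k' : power of k of order p
  set k' : G := k ^ (orderOf k / p) with hk'def
  have hordk' : orderOf k' = p := by
    rw [hk'def]; exact orderOf_pow_orderOf_div hk0 hpd
  have hcommnk : Commute n k := Subgroup.mem_centralizer_singleton_iff.mp hnCk
  have hcommnk' : Commute n k' := hcommnk.pow_right _
  -- z inverts k'
  have hconjpow : ∀ g : G, ∀ m : ℕ, z * g ^ m * z = (z * g * z) ^ m := by
    intro g m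
    have := (conj_pow (i := m) (a := z) (b := g)).symm
    simpa [hzinv] using this
  have hzk : z * k * z = k⁻¹ := by
    have := hinv k hk; rwa [hzinv] at this
  have hzk' : z * k' * z = k'⁻¹ := by
    rw [hk'def, hconjpow, hzk, inv_pow]
  -- C = C_N(k'), a 2-group normalized by z, containing n
  set C : Subgroup G := N ⊓ Subgroup.centralizer {k'} with hCdef
  have hnC : n ∈ C := by
    exact Subgroup.mem_inf.mpr ⟨hnN, Subgroup.mem_centralizer_singleton_iff.mpr hcommnk'.eq⟩
  have hC2 : IsPGroup 2 C := hN2.to_le inf_le_left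
  have hzC : ∀ c ∈ C, z * c * z ∈ C := by
    intro c hc
    rw [Subgroup.mem_inf] at hc ⊢
    obtain ⟨hcN, hcC⟩ := hc
    constructor
    · have := (Subgroup.mem_normalizer_iff.mp hzN c).mp hcN
      rwa [hzinv] at this
    · rw [Subgroup.mem_centralizer_singleton_iff]
      have hcc : Commute c k' := Subgroup.mem_centralizer_singleton_iff.mp hcC
      have h1 : Commute (z * c * z⁻¹) (z * k' * z⁻¹) := by
        simpa using hcc.map (MulAut.conj z)
      rw [hzinv, hzk'] at h1
      have h2 : Commute (z * c * z) k' := by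
        have := h1.inv_right; simpa using this
      exact h2.eq
  -- the involution on C given by conjugation by z
  let f : C → C := fun c => ⟨z * (c : G) * z, hzC c c.2⟩
  have hfinv : Function.Involutive f := by
    intro c
    apply Subtype.ext
    show z * (z * (c : G) * z) * z = c
    calc z * (z * (c : G) * z) * z = (z * z) * (c : G) * (z * z) := by group
    _ = (c : G) := by rw [hz2]; group
  let e : Equiv.Perm C := hfinv.toPerm f
  have he2 : e * e = 1 := Equiv.ext fun c => hfinv c
  set Z : Subgroup (Equiv.Perm C) := Subgroup.zpowers e with hZdef
  have he2' : e ^ (2:ℤ) = 1 := by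
    rw [show (2:ℤ) = ((2:ℕ):ℤ) by norm_num, zpow_natCast, pow_two]; exact he2
  have hZ2 : IsPGroup 2 Z := by
    intro g
    refine ⟨1, ?_⟩
    obtain ⟨m, hm⟩ := g.2
    apply Subtype.ext
    show (g : Equiv.Perm C) ^ (2 ^ 1 : ℕ) = 1
    rw [← hm]
    calc (e ^ m) ^ (2 ^ 1 : ℕ) = e ^ (m * 2) := by
          rw [← zpow_natCast (e ^ m), ← zpow_mul]; norm_num
    _ = (e ^ (2:ℤ)) ^ m := by rw [← zpow_mul, mul_comm]
    _ = 1 := by rw [he2', one_zpow]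
  -- counting fixed points
  have key := hZ2.card_modEq_card_fixedPoints C
  haveI : Nontrivial C := ⟨⟨⟨n, hnC⟩, 1, by simp [Subtype.ext_iff, hn1]⟩⟩
  have hCeven : 2 ∣ Nat.card C := by
    obtain ⟨a, ha, hcard⟩ := (hC2.nontrivial_iff_card).mp inferInstance
    rw [hcard]
    exact dvd_pow_self 2 ha.ne'
  have hFeven : 2 ∣ Nat.card (MulAction.fixedPoints Z C) := by
    have h0 : Nat.card C ≡ 0 [MOD 2] := (Nat.modEq_zero_iff_dvd).mpr hCeven
    exact (Nat.modEq_zero_iff_dvd).mp (key.symm.trans h0)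
  have h1F : (1 : C) ∈ MulAction.fixedPoints Z C := by
    intro g
    obtain ⟨m, hm⟩ := g.2
    show (g : Equiv.Perm C) • (1 : C) = 1
    rw [← hm]
    have h1e : Function.IsFixedPt e (1 : C) := by
      show f 1 = 1
      apply Subtype.ext
      show z * (1 : G) * z = 1
      rw [mul_one, hz2]
    exact h1e.perm_zpow m
  have hFpos : 0 < Nat.card (MulAction.fixedPoints Z C) := by
    haveI : Nonempty (MulAction.fixedPoints Z C) := ⟨⟨1, h1F⟩⟩
    exact Nat.card_pos
  -- get a nontrivial fixed point
  obtain ⟨c, hcF, hc1⟩ : ∃ c : C, c ∈ MulAction.fixedPoints Z C ∧ c ≠ 1 := by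
    by_contra hcon
    push_neg at hcon
    have hsub : MulAction.fixedPoints Z C ⊆ {(1 : C)} := by
      intro x hx
      exact hcon x hx
    have : Nat.card (MulAction.fixedPoints Z C) ≤ 1 := by
      rw [Nat.card_coe_set_eq]
      calc (MulAction.fixedPoints Z C).ncard ≤ ({(1:C)} : Set C).ncard :=
            Set.ncard_le_ncard hsub (Set.finite_singleton _)
      _ = 1 := Set.ncard_singleton _
    omega
  have hfc : z * (c : G) * z = (c : G) := by
    have := hcF ⟨e, Subgroup.mem_zpowers e⟩
    have h2 : f c = c := this
    exact congrArg Subtype.val h2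
  -- c has 2-power order, extract element of order 2
  set c0 : G := (c : G) with hc0def
  have hc0C : c0 ∈ C := c.2
  have hc0N : c0 ∈ N := (Subgroup.mem_inf.mp hc0C).1
  have hc0k' : Commute c0 k' :=
    Subgroup.mem_centralizer_singleton_iff.mp (Subgroup.mem_inf.mp hc0C).2
  have hc0ne : c0 ≠ 1 := fun h => hc1 (OneMemClass.coe_eq_one.mp h)
  obtain ⟨a, ha⟩ : ∃ a : ℕ, orderOf c0 = 2 ^ a := by
    obtain ⟨a, ha⟩ := (IsPGroup.iff_orderOf.mp hC2) c
    refine ⟨a, ?_⟩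
    rw [hc0def, Subgroup.orderOf_coe, ha]
  have hc0ord0 : orderOf c0 ≠ 0 := (orderOf_pos c0).ne'
  have hc0ord1 : orderOf c0 ≠ 1 := by simpa [orderOf_eq_one_iff] using hc0ne
  have h2dvd : 2 ∣ orderOf c0 := by
    rw [ha]
    refine dvd_pow_self 2 ?_
    rintro rfl
    simp at ha
    exact hc0ord1 (by rw [ha]; norm_num)
  set m0 : G := c0 ^ (orderOf c0 / 2) with hm0def
  have hordm0 : orderOf m0 = 2 := by
    rw [hm0def]; exact orderOf_pow_orderOf_div hc0ord0 h2dvd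
  have hm0k' : Commute m0 k' := hc0k'.pow_left _
  have hm0z : z * m0 * z = m0 := by
    rw [hm0def, hconjpow, hfc]
  have hm0sq : m0 * m0 = 1 := by
    have := pow_orderOf_eq_one m0
    rwa [hordm0, pow_two] at this
  have hm0inv : m0⁻¹ = m0 := by rw [inv_eq_iff_mul_eq_one]; exact hm0sq
  -- the real element of order 2p
  set x : G := m0 * k' with hxdef
  have hxreal : IsReal x := by
    refine ⟨z, ?_⟩
    rw [hzinv, hxdef]
    calc z * (m0 * k') * z = (z * m0 * z) * (z * k' * z) := by
          have : z * z = 1 := hz2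
          calc z * (m0 * k') * z = (z * m0) * (z * z) * (k' * z) := by
                rw [this]; group
          _ = (z * m0 * z) * (z * k' * z) := by group
    _ = m0 * k'⁻¹ := by rw [hm0z, hzk']
    _ = (m0 * k')⁻¹ := by
          rw [mul_inv_rev, hm0inv]
          exact hm0k'.inv_right.eq
  have hordx : orderOf x = 2 * p := by
    rw [hxdef, hm0k'.orderOf_mul_eq_mul_orderOf_of_coprime ?_, hordm0, hordk']
    rw [hordm0, hordk']
    exact (Nat.coprime_primes Nat.prime_two hp).mpr (Ne.symm hp2)
  have hxne : x ≠ 1 := by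
    intro hx1
    rw [hx1, orderOf_one] at hordx
    have := hp.two_le
    omega
  rcases hP x hxreal with h | h
  · exact hxne h
  · rw [hordx] at h
    obtain ⟨q, l, hq, hl, hql⟩ := h
    have hqp : q.Prime := hq.nat_prime
    have h2q : (2:ℕ) ∣ q ^ l := ⟨p, hql⟩
    have hpq : p ∣ q ^ l := ⟨2, by rw [hql]; ring⟩
    have hq2 : q = 2 := ((Nat.prime_dvd_prime_iff_eq Nat.prime_two hqp).mp
      (Nat.Prime.dvd_of_dvd_pow Nat.prime_two h2q)).symm
    have hqp' : q = p := (Nat.prime_dvd_prime_iff_eq hp hqp).mp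
      (Nat.Prime.dvd_of_dvd_pow hp hpq) |>.symm
    exact hp2 (by rw [← hqp', hq2])
end
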